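/- arXiv:2009.13206 — 6 statements merged into one kernel-verified Lean document; each statement's English description precedes it below -/
import Mathlib

section
/- Let p : X → L and q : Y → L' be continuous surjections of topological spaces X, Y onto compact Hausdorff spaces L, L', with X locally compact and Y Hausdorff. If p is an open map, then the compact-open topology on C_p^q(X,Y) is Hausdorff. -/
open Filter Topology Set Function MeasureTheory

/-- A continuous fiber map between the fibers of the bundles `p : X → L` and `q : Y → L'`:
an element of `C_p^q(X,Y)` with source `src` and range `rng`. -/
structure FiberMap {X L Y L' : Type} [TopologicalSpace X] [TopologicalSpace Y]
    (p : X → L) (q : Y → L') where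
  src : L
  rng : L'
  toFun : {x : X // p x = src} → Y
  maps_to : ∀ x, q (toFun x) = rng
  continuous_toFun : Continuous toFun

/-- The compact-open topology on `C_p^q(X,Y)`, generated by the sets
`W(C,O) = {θ | θ(C ∩ X_{s(θ)}) ⊆ O}` for `C ⊆ X` compact and `O ⊆ Y` open. -/
def fiberCO {X L Y L' : Type} [TopologicalSpace X] [TopologicalSpace Y]
    (p : X → L) (q : Y → L') : TopologicalSpace (FiberMap p q) :=
  TopologicalSpace.generateFrom
    {W | ∃ (C : Set X) (O : Set Y), IsCompact C ∧ IsOpen O ∧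
      W = {θ : FiberMap p q | ∀ x : {x : X // p x = θ.src}, (x : X) ∈ C → θ.toFun x ∈ O}}

instance fiberMapTopology {X L Y L' : Type} [TopologicalSpace X] [TopologicalSpace Y]
    (p : X → L) (q : Y → L') : TopologicalSpace (FiberMap p q) :=
  fiberCO p q

section Aux

variable {X L Y L' : Type} [TopologicalSpace X] [TopologicalSpace Y]
  {p : X → L} {q : Y → L'}

lemma FiberMap.isOpen_W {C : Set X} {O : Set Y} (hC : IsCompact C) (hO : IsOpen O) :
    IsOpen {θ : FiberMap p q | ∀ x : {x : X // p x = θ.src}, (x : X) ∈ C → θ.toFun x ∈ O} :=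
  TopologicalSpace.GenerateOpen.basic _ ⟨C, O, hC, hO, rfl⟩

variable [TopologicalSpace L] [T2Space L] [CompactSpace L] [LocallyCompactSpace X]
  [TopologicalSpace L']

lemma FiberMap.continuous_src (hp : Continuous p) (hps : Function.Surjective p)
    (hpo : IsOpenMap p) :
    Continuous (fun θ : FiberMap p q => θ.src) := by
  rw [continuous_def]
  intro U hU
  rw [isOpen_iff_forall_mem_open]
  intro θ hθ
  obtain ⟨g, hg⟩ := hps.hasRightInverse
  have hF : IsCompact (Uᶜ) := hU.isClosed_compl.isCompact
  have hex : ∀ a ∈ Uᶜ, ∃ K : Set X, IsCompact K ∧ g a ∈ interior K ∧ K ⊆ p ⁻¹' {θ.src}ᶜ := by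
    intro a ha
    apply exists_compact_subset (hp.isOpen_preimage _ (isOpen_compl_singleton))
    simp only [mem_preimage, mem_compl_iff, mem_singleton_iff, hg a]
    rintro rfl; exact ha hθ
  choose K hK1 hK2 hK3 using hex
  obtain ⟨t, ht⟩ := hF.elim_nhds_subcover' (fun a ha => p '' interior (K a ha)) (by
    intro a ha
    exact (hpo _ isOpen_interior).mem_nhds ⟨g a, hK2 a ha, hg a⟩)
  refine ⟨{θ' : FiberMap p q | ∀ x : {x : X // p x = θ'.src},
      (x : X) ∈ (⋃ a ∈ t, K a.1 a.2) → θ'.toFun x ∈ (∅ : Set Y)}, ?_, ?_, ?_⟩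
  · intro θ' hθ'
    by_contra hU'
    obtain ⟨a, hat, z, hz, hpz⟩ : ∃ a ∈ t, ∃ z ∈ interior (K a.1 a.2), p z = θ'.src := by
      have := ht (show θ'.src ∈ Uᶜ from hU')
      simp only [mem_iUnion, mem_image] at this
      obtain ⟨a, hat, z, hz, hpz⟩ := this
      exact ⟨a, hat, z, hz, hpz⟩
    exact hθ' ⟨z, hpz⟩ (mem_iUnion₂.mpr ⟨a, hat, interior_subset hz⟩)
  · exact FiberMap.isOpen_W (t.isCompact_biUnion (fun a _ => hK1 a.1 a.2)) isOpen_empty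
  · intro x hx
    obtain ⟨a, hat, hxa⟩ := mem_iUnion₂.mp hx
    exact absurd x.2 (by simpa using hK3 a.1 a.2 hxa)

lemma FiberMap.continuous_rng (hp : Continuous p) (hps : Function.Surjective p)
    (hpo : IsOpenMap p) (hq : Continuous q) :
    Continuous (fun θ : FiberMap p q => θ.rng) := by
  rw [continuous_def]
  intro V hV
  rw [isOpen_iff_forall_mem_open]
  intro θ hθ
  obtain ⟨x₀, hx₀⟩ := hps θ.src
  obtain ⟨K, hK1, hK2, _⟩ := exists_compact_subset isOpen_univ (mem_univ x₀)
  refine ⟨{θ' : FiberMap p q | ∀ x : {x : X // p x = θ'.src},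
      (x : X) ∈ K → θ'.toFun x ∈ q ⁻¹' V} ∩
      ((fun θ : FiberMap p q => θ.src) ⁻¹' (p '' interior K)), ?_, ?_, ?_⟩
  · rintro θ' ⟨h1, h2⟩
    obtain ⟨z, hz, hpz⟩ := h2
    have := h1 ⟨z, hpz⟩ (interior_subset hz)
    simpa [θ'.maps_to] using this
  · exact ((FiberMap.isOpen_W hK1 (hq.isOpen_preimage _ hV)).inter
      ((FiberMap.continuous_src hp hps hpo).isOpen_preimage _ (hpo _ isOpen_interior)))
  · constructor
    · intro x _
      simp only [mem_preimage, θ.maps_to]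
      exact hθ
    · exact ⟨x₀, hK2, hx₀⟩

end Aux


/-- If `p` is open, `X` is locally compact and `Y` is Hausdorff, then the compact-open
topology on `C_p^q(X,Y)` is Hausdorff. -/
theorem statement1 {X L Y L' : Type} [TopologicalSpace X] [TopologicalSpace Y]
    [TopologicalSpace L] [TopologicalSpace L'] [CompactSpace L] [T2Space L]
    [CompactSpace L'] [T2Space L'] [LocallyCompactSpace X] [T2Space Y]
    (p : X → L) (q : Y → L') (hp : Continuous p) (hps : Function.Surjective p)
    (hq : Continuous q) (hqs : Function.Surjective q) (hpo : IsOpenMap p) :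
    T2Space (FiberMap p q) := by
  constructor
  intro θ₁ θ₂ hne
  by_cases hs : θ₁.src = θ₂.src
  case neg =>
    obtain ⟨u, v, hu, hv, h1, h2, huv⟩ := t2_separation hs
    exact ⟨_, _, (FiberMap.continuous_src hp hps hpo).isOpen_preimage _ hu,
      (FiberMap.continuous_src hp hps hpo).isOpen_preimage _ hv, h1, h2,
      huv.preimage _⟩
  by_cases hr : θ₁.rng = θ₂.rng
  case neg =>
    obtain ⟨u, v, hu, hv, h1, h2, huv⟩ := t2_separation hr
    exact ⟨_, _, (FiberMap.continuous_rng hp hps hpo hq).isOpen_preimage _ hu,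
      (FiberMap.continuous_rng hp hps hpo hq).isOpen_preimage _ hv, h1, h2,
      huv.preimage _⟩
  obtain ⟨l, l', f₁, m₁, c₁⟩ := θ₁
  obtain ⟨l₂, l₂', f₂, m₂, c₂⟩ := θ₂
  simp only [] at hs hr
  subst hs; subst hr
  have hf : f₁ ≠ f₂ := by rintro rfl; exact hne rfl
  obtain ⟨x, hx⟩ := Function.ne_iff.mp hf
  obtain ⟨O₁, O₂, hO₁, hO₂, hm1, hm2, hO⟩ := t2_separation hx
  have h1 : IsOpen (f₁ ⁻¹' O₁) := hO₁.preimage c₁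
  have h2 : IsOpen (f₂ ⁻¹' O₂) := hO₂.preimage c₂
  obtain ⟨U₁, hU₁, hU₁eq⟩ := isOpen_induced_iff.mp h1
  obtain ⟨U₂, hU₂, hU₂eq⟩ := isOpen_induced_iff.mp h2
  have hxU : (x : X) ∈ U₁ ∩ U₂ := by
    constructor
    · have : x ∈ f₁ ⁻¹' O₁ := hm1
      rw [← hU₁eq] at this; exact this
    · have : x ∈ f₂ ⁻¹' O₂ := hm2
      rw [← hU₂eq] at this; exact this
  obtain ⟨K, hK1, hK2, hK3⟩ := exists_compact_subset (hU₁.inter hU₂) hxU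
  refine ⟨({θ : FiberMap p q | ∀ z : {x : X // p x = θ.src},
      (z : X) ∈ K → θ.toFun z ∈ O₁} ∩ ((fun θ : FiberMap p q => θ.src) ⁻¹' (p '' interior K))),
    ({θ : FiberMap p q | ∀ z : {x : X // p x = θ.src},
      (z : X) ∈ K → θ.toFun z ∈ O₂} ∩ ((fun θ : FiberMap p q => θ.src) ⁻¹' (p '' interior K))),
    (FiberMap.isOpen_W hK1 hO₁).inter
      ((FiberMap.continuous_src hp hps hpo).isOpen_preimage _ (hpo _ isOpen_interior)),
    (FiberMap.isOpen_W hK1 hO₂).inter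
      ((FiberMap.continuous_src hp hps hpo).isOpen_preimage _ (hpo _ isOpen_interior)),
    ⟨?_, ⟨x, hK2, x.2⟩⟩, ⟨?_, ⟨x, hK2, x.2⟩⟩, ?_⟩
  · intro z hz
    have : z ∈ Subtype.val ⁻¹' U₁ := (hK3 hz).1
    rw [hU₁eq] at this; exact this
  · intro z hz
    have : z ∈ Subtype.val ⁻¹' U₂ := (hK3 hz).2
    rw [hU₂eq] at this; exact this
  · rw [Set.disjoint_left]
    rintro θ' ⟨ha1, z, hz, hpz⟩ ⟨hb1, -⟩
    exact Set.disjoint_left.mp hO (ha1 ⟨z, hpz⟩ (interior_subset hz))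
      (hb1 ⟨z, hpz⟩ (interior_subset hz))
end

section
/- Let p : K → L and q : Y → L' be continuous surjections between compact Hausdorff spaces with p open. Then on C_p^q(K,Y) the compact-open topology coincides with the Vietoris topology, i.e. with the initial topology induced by the graph map Gr : C_p^q(K,Y) → C(K×Y), θ ↦ {(x, θ(x)) : x ∈ K_{s(θ)}}, where C(K×Y) denotes the set of nonempty closed subsets of K×Y equipped with the Vietoris topology. -/
open Filter Topology Set Function MeasureTheory

/-- The set of nonempty closed subsets of `Z`. -/
def NClosed (Z : Type) [TopologicalSpace Z] : Type := {A : Set Z // IsClosed A ∧ A.Nonempty}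

/-- The Vietoris topology on the set of nonempty closed subsets of `Z`, generated by the
sets `U⁻ = {A | A ∩ U ≠ ∅}` and `U⁺ = {A | A ⊆ U}` for `U ⊆ Z` open. -/
def vietoris (Z : Type) [TopologicalSpace Z] : TopologicalSpace (NClosed Z) :=
  TopologicalSpace.generateFrom
    ({W | ∃ U : Set Z, IsOpen U ∧ W = {A : NClosed Z | (A.1 ∩ U).Nonempty}} ∪
     {W | ∃ U : Set Z, IsOpen U ∧ W = {A : NClosed Z | A.1 ⊆ U}})

section Aux

variable {K L Y L' : Type} [TopologicalSpace K] [TopologicalSpace Y]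
  [TopologicalSpace L] [TopologicalSpace L']

/-- The subbasic compact-open set `W(C,O)`. -/
def Wset (p : K → L) (q : Y → L') (C : Set K) (O : Set Y) : Set (FiberMap p q) :=
  {θ | ∀ x : {x : K // p x = θ.src}, (x : K) ∈ C → θ.toFun x ∈ O}

/-- The graph of a fiber map. -/
def Gset (p : K → L) (q : Y → L') (θ : FiberMap p q) : Set (K × Y) :=
  {z : K × Y | ∃ h : p z.1 = θ.src, θ.toFun ⟨z.1, h⟩ = z.2}

lemma wset_open (p : K → L) (q : Y → L') {C : Set K} {O : Set Y}
    (hC : IsCompact C) (hO : IsOpen O) : IsOpen (Wset p q C O) :=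
  TopologicalSpace.isOpen_generateFrom_of_mem ⟨C, O, hC, hO, rfl⟩

/-- On each fiber map, locally choose boxes witnessing an open set around a graph point. -/
lemma exists_box (p : K → L) (q : Y → L') [T2Space K] [CompactSpace K]
    {U : Set (K × Y)} (hU : IsOpen U) (θ : FiberMap p q)
    (x : {x : K // p x = θ.src}) (hx : ((x : K), θ.toFun x) ∈ U) :
    ∃ (V : Set K) (O : Set Y), IsOpen V ∧ IsOpen O ∧ (x : K) ∈ V ∧
      closure V ×ˢ O ⊆ U ∧
      ∀ y : {y : K // p y = θ.src}, (y : K) ∈ closure V → θ.toFun y ∈ O := by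
  obtain ⟨A, O, hA, hO, hxA, hxO, hAO⟩ := isOpen_prod_iff.mp hU (x : K) (θ.toFun x) hx
  obtain ⟨B, hB, hBeq⟩ := isOpen_induced_iff.mp (hO.preimage θ.continuous_toFun)
  have hxB : (x : K) ∈ B := by
    have : x ∈ θ.toFun ⁻¹' O := hxO
    rw [← hBeq] at this; exact this
  obtain ⟨t, ht, htc, hts⟩ :=
    exists_mem_nhds_isClosed_subset ((hA.inter hB).mem_nhds ⟨hxA, hxB⟩)
  refine ⟨interior t, O, isOpen_interior, hO, mem_interior_iff_mem_nhds.mpr ht, ?_, ?_⟩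
  · intro z hz
    exact hAO ⟨(hts ((closure_minimal interior_subset htc) hz.1)).1, hz.2⟩
  · intro y hy
    have hyB : (y : K) ∈ B := (hts ((closure_minimal interior_subset htc) hy)).2
    have : y ∈ Subtype.val ⁻¹' B := hyB
    rw [hBeq] at this; exact this

/-- `Gr⁻¹(U⁺)` is compact-open open. -/
lemma plus_open (p : K → L) (q : Y → L') [CompactSpace K] [T2Space K] [T1Space L]
    (hp : Continuous p) {U : Set (K × Y)} (hU : IsOpen U) :
    IsOpen {θ : FiberMap p q | Gset p q θ ⊆ U} := by
  rw [isOpen_iff_forall_mem_open]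
  intro θ hθ
  -- choose boxes around each point of the graph
  have hbox : ∀ x : {x : K // p x = θ.src},
      ∃ (V : Set K) (O : Set Y), IsOpen V ∧ IsOpen O ∧ (x : K) ∈ V ∧
        closure V ×ˢ O ⊆ U ∧
        ∀ y : {y : K // p y = θ.src}, (y : K) ∈ closure V → θ.toFun y ∈ O := by
    intro x
    exact exists_box p q hU θ x (hθ ⟨x.2, rfl⟩)
  choose V O hV hO hxV hVO hmap using hbox
  -- finite subcover of the fiber
  have hF : IsCompact {y : K | p y = θ.src} := by
    have : {y : K | p y = θ.src} = p ⁻¹' {θ.src} := rfl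
    rw [this]
    exact (isClosed_singleton.preimage hp).isCompact
  obtain ⟨s, hs⟩ := hF.elim_finite_subcover V hV (fun y hy => mem_iUnion.mpr ⟨⟨y, hy⟩, hxV _⟩)
  -- the compact-open neighbourhood
  refine ⟨Wset p q (⋃ x ∈ s, V x)ᶜ ∅ ∩ ⋂ x ∈ s, Wset p q (closure (V x)) (O x),
    ?_, ?_, ?_, ?_⟩
  · -- subset
    rintro θ' ⟨h1, h2⟩ z ⟨hz, hz2⟩
    have hz1 : z.1 ∈ ⋃ x ∈ s, V x := by
      by_contra hc
      exact absurd (h1 ⟨z.1, hz⟩ hc) (Set.notMem_empty _)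
    rw [Set.mem_iUnion₂] at hz1
    obtain ⟨x, hxs, hzx⟩ := hz1
    have h2x : θ' ∈ Wset p q (closure (V x)) (O x) := Set.mem_iInter₂.mp h2 x hxs
    have hmem : ((z.1 : K), θ'.toFun ⟨z.1, hz⟩) ∈ U :=
      hVO x ⟨subset_closure hzx, h2x ⟨z.1, hz⟩ (subset_closure hzx)⟩
    rw [hz2] at hmem
    exact hmem
  · -- open
    refine IsOpen.inter (wset_open p q ?_ isOpen_empty) (isOpen_biInter_finset ?_)
    · exact ((isOpen_biUnion (fun x _ => hV x)).isClosed_compl).isCompact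
    · exact fun x _ => wset_open p q ((isClosed_closure).isCompact) (hO x)
  · -- θ in first part
    intro y hy
    exact absurd (hs y.2) hy
  · -- θ in second part
    exact Set.mem_iInter₂.mpr fun x _ y hy => hmap x y hy

/-- `Gr⁻¹(U⁻)` is compact-open open. -/
lemma minus_open (p : K → L) (q : Y → L') [CompactSpace K] [T2Space K] [T1Space L]
    (hp : Continuous p) (hps : Function.Surjective p) (hpo : IsOpenMap p)
    {U : Set (K × Y)} (hU : IsOpen U) :
    IsOpen {θ : FiberMap p q | (Gset p q θ ∩ U).Nonempty} := by
  rw [isOpen_iff_forall_mem_open]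
  intro θ hθ
  obtain ⟨z, ⟨hx0, hy0⟩, hzU⟩ := hθ
  have hzU' : ((z.1 : K), θ.toFun ⟨z.1, hx0⟩) ∈ U := by rw [hy0]; exact hzU
  obtain ⟨V, O, hV, hO, hxV, hVO, hmap⟩ := exists_box p q hU θ ⟨z.1, hx0⟩ hzU'
  refine ⟨Wset p q (p ⁻¹' (p '' V))ᶜ ∅ ∩ Wset p q (closure V) O, ?_, ?_, ?_, ?_⟩
  · -- subset
    rintro θ' ⟨h1, h2⟩
    obtain ⟨y, hy⟩ := hps θ'.src
    have hyV : p y ∈ p '' V := by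
      by_contra hc
      exact absurd (h1 ⟨y, hy⟩ hc) (Set.notMem_empty _)
    obtain ⟨x1, hx1V, hx1⟩ := hyV
    have hx1src : p x1 = θ'.src := by rw [hx1, hy]
    refine ⟨(x1, θ'.toFun ⟨x1, hx1src⟩), ⟨hx1src, rfl⟩, ?_⟩
    exact hVO ⟨subset_closure hx1V, h2 ⟨x1, hx1src⟩ (subset_closure hx1V)⟩
  · -- open
    refine IsOpen.inter (wset_open p q ?_ isOpen_empty)
      (wset_open p q (isClosed_closure.isCompact) hO)
    exact (((hpo V hV).preimage hp).isClosed_compl).isCompact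
  · -- θ in first part
    intro y hy
    exact absurd (show p (y : K) ∈ p '' V from ⟨z.1, hxV, by rw [hx0, y.2]⟩) hy
  · -- θ in second part
    exact fun y hy => hmap y hy

end Aux

/-- For compact Hausdorff spaces and an open map `p`, the compact-open topology on
`C_p^q(K,Y)` coincides with the Vietoris topology, i.e. the topology induced by the graph
map `Gr : C_p^q(K,Y) → C(K × Y)` into the nonempty closed subsets of `K × Y` with the
Vietoris topology. -/
theorem statement2 {K L Y L' : Type} [TopologicalSpace K] [CompactSpace K] [T2Space K]
    [TopologicalSpace Y] [CompactSpace Y] [T2Space Y]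
    [TopologicalSpace L] [CompactSpace L] [T2Space L]
    [TopologicalSpace L'] [CompactSpace L'] [T2Space L']
    (p : K → L) (q : Y → L') (hp : Continuous p) (hps : Function.Surjective p)
    (hpo : IsOpenMap p) (hq : Continuous q) (hqs : Function.Surjective q)
    (Gr : FiberMap p q → NClosed (K × Y))
    (hGr : ∀ θ : FiberMap p q,
      (Gr θ).1 = {z : K × Y | ∃ h : p z.1 = θ.src, θ.toFun ⟨z.1, h⟩ = z.2}) :
    fiberCO p q = TopologicalSpace.induced Gr (vietoris (K × Y)) := by
  rw [vietoris, induced_generateFrom_eq]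
  apply le_antisymm
  · -- fiberCO is finer than the induced Vietoris topology
    apply le_generateFrom
    rintro _ ⟨W, hW, rfl⟩
    rcases hW with ⟨U, hUo, rfl⟩ | ⟨U, hUo, rfl⟩
    · have heq : Gr ⁻¹' {A : NClosed (K × Y) | (A.1 ∩ U).Nonempty}
          = {θ : FiberMap p q | (Gset p q θ ∩ U).Nonempty} := by
        ext θ
        simp only [Set.mem_preimage, Set.mem_setOf_eq, hGr θ]
        rfl
      rw [heq]
      exact minus_open p q hp hps hpo hUo
    · have heq : Gr ⁻¹' {A : NClosed (K × Y) | A.1 ⊆ U}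
          = {θ : FiberMap p q | Gset p q θ ⊆ U} := by
        ext θ
        simp only [Set.mem_preimage, Set.mem_setOf_eq, hGr θ]
        rfl
      rw [heq]
      exact plus_open p q hp hUo
  · -- the induced Vietoris topology is finer than fiberCO
    rw [fiberCO]
    apply le_generateFrom
    rintro _ ⟨C, O, hC, hO, rfl⟩
    have heq : {θ : FiberMap p q | ∀ x : {x : K // p x = θ.src}, (x : K) ∈ C → θ.toFun x ∈ O}
        = Gr ⁻¹' {A : NClosed (K × Y) | A.1 ⊆ (C ×ˢ Oᶜ)ᶜ} := by
      ext θ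
      simp only [Set.mem_preimage, Set.mem_setOf_eq, hGr θ]
      constructor
      · rintro h z ⟨hz, hz2⟩ hzmem
        exact hzmem.2 (hz2 ▸ h ⟨z.1, hz⟩ hzmem.1)
      · intro h x hxC
        by_contra hc
        exact h (show ((x : K), θ.toFun x) ∈ _ from ⟨x.2, rfl⟩) ⟨hxC, hc⟩
    rw [heq]
    apply TopologicalSpace.GenerateOpen.basic
    refine ⟨{A : NClosed (K × Y) | A.1 ⊆ (C ×ˢ Oᶜ)ᶜ}, Or.inr ⟨(C ×ˢ Oᶜ)ᶜ, ?_, rfl⟩, rfl⟩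
    exact (hC.isClosed.prod hO.isClosed_compl).isOpen_compl
end

section
/- Let p : K → L be an open continuous surjection of a compact Hausdorff space K onto a compact Hausdorff space L, and let q : Y → L' be a continuous surjection of a Hausdorff uniform space Y onto a compact Hausdorff space L'. Then a subset F ⊆ C_p^q(K,Y) has compact closure in the compact-open topology if and only if both of the following hold: (i) the set ⋃_{θ∈F} θ(K_{s(θ)}) has compact closure in Y; (ii) F is uniformly equicontinuous, i.e. for every entourage U of Y there is an entourage V of the (unique) uniformity of K such that (θ(x₁), θ(x₂)) ∈ U whenever θ ∈ F and x₁, x₂ ∈ K_{s(θ)} with (x₁,x₂) ∈ V. -/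
open Filter Topology Set Function MeasureTheory

/-!
Mark finitely many points in the source fiber of a fiber map. Evaluation at a marked point is
continuous because `K` is locally compact, and forgetting the marked points is an open map because
`p` is open. The pointed maps over the compact set `closure F` form a compact set, so the total
image is relatively compact, and the pairs of points of a common fiber where some map fails to be
`U`-close form a compact set off the diagonal, whose complement is an entourage of `K`. Because
forgetting the points is open, closed conditions on pointed maps pass from `F` to `closure F`.

Conversely, let `G` be an ultrafilter on `closure F` and `l` the limit of the sources. At a
point `x` of `K_l`, take a cluster value of `θ(x')` as `θ` runs along `G` and `x'` tends to `x`
inside the fiber of `θ`; equicontinuity makes it a limit. These limits define a continuous map on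
`K_l`, and `G` converges to it in the compact-open topology.
-/

open Uniformity

namespace FiberMap

section Topological

variable {X L Y L' : Type} [TopologicalSpace X] [TopologicalSpace Y] {p : X → L} {q : Y → L'}

def totalImage (F : Set (FiberMap p q)) : Set Y :=
  ⋃ θ ∈ F, range θ.toFun

theorem isOpen_setOf_mapsTo {C : Set X} {O : Set Y} (hC : IsCompact C) (hO : IsOpen O) :
    IsOpen {θ : FiberMap p q | MapsTo θ.toFun (Subtype.val ⁻¹' C) O} :=
  TopologicalSpace.GenerateOpen.basic _ ⟨C, O, hC, hO, rfl⟩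

theorem le_nhds_iff {θ : FiberMap p q} {G : Filter (FiberMap p q)} :
    G ≤ 𝓝 θ ↔ ∀ C O, IsCompact C → IsOpen O → MapsTo θ.toFun (Subtype.val ⁻¹' C) O →
      {θ' : FiberMap p q | MapsTo θ'.toFun (Subtype.val ⁻¹' C) O} ∈ G := by
  change G ≤ @nhds _ (TopologicalSpace.generateFrom _) θ ↔ _
  simp only [TopologicalSpace.nhds_generateFrom, le_iInf₂_iff, le_principal_iff, mem_ofPred_eq]
  constructor
  · exact fun h C O hC hO hθ => h _ ⟨hθ, C, O, hC, hO, rfl⟩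
  · rintro h _ ⟨hθ, C, O, hC, hO, rfl⟩
    exact h C O hC hO hθ

theorem continuous_src_s3 [TopologicalSpace L] [CompactSpace X] (hp : Continuous p)
    (hps : Surjective p) : Continuous (src : FiberMap p q → L) := by
  refine continuous_def.2 fun V hV => ?_
  convert isOpen_setOf_mapsTo (q := q) (hV.isClosed_compl.preimage hp).isCompact isOpen_empty
    using 1
  ext θ
  obtain ⟨x, hx⟩ := hps θ.src
  refine ⟨fun hθ x' hx' => hx' (by rw [x'.2]; exact hθ), fun hθ => ?_⟩
  by_contra hθV
  exact hθ (x := ⟨x, hx⟩) (show p x ∈ Vᶜ by rwa [hx])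

abbrev Pointed (ι : Type) (p : X → L) (q : Y → L') :=
  {w : FiberMap p q × (ι → X) // ∀ i, p (w.2 i) = w.1.src}

namespace Pointed

variable {ι : Type}

def fiberMap (w : Pointed ι p q) : FiberMap p q := w.1.1

def point (w : Pointed ι p q) (i : ι) : X := w.1.2 i

def eval (w : Pointed ι p q) (i : ι) : Y := w.fiberMap.toFun ⟨w.point i, w.2 i⟩

theorem continuous_point (i : ι) : Continuous fun w : Pointed ι p q => w.point i :=
  (continuous_apply i).comp (continuous_snd.comp continuous_subtype_val)

theorem continuous_eval [LocallyCompactSpace X] (i : ι) :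
    Continuous fun w : Pointed ι p q => w.eval i := by
  refine continuous_iff_continuousAt.2 fun w => ?_
  refine (nhds_basis_opens _).tendsto_right_iff.2 fun O ⟨hwO, hO⟩ => ?_
  obtain ⟨G, hG, hGθ⟩ := isOpen_induced_iff.1 (hO.preimage w.fiberMap.continuous_toFun)
  have hxG : (⟨w.point i, w.2 i⟩ : {x // p x = w.fiberMap.src}) ∈ Subtype.val ⁻¹' G := by
    rwa [hGθ]
  obtain ⟨C, hC, hxC, hCG⟩ := exists_compact_subset hG hxG
  have hθ : MapsTo w.fiberMap.toFun (Subtype.val ⁻¹' C) O := fun x hx => by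
    rw [← mem_preimage, ← hGθ]
    exact hCG hx
  have hN : {θ : FiberMap p q | MapsTo θ.toFun (Subtype.val ⁻¹' C) O} ×ˢ
      {x : ι → X | x i ∈ interior C} ∈ 𝓝 w.1 :=
    prod_mem_nhds ((isOpen_setOf_mapsTo hC hO).mem_nhds hθ)
      ((isOpen_interior.preimage (continuous_apply i)).mem_nhds hxC)
  filter_upwards [continuous_subtype_val.continuousAt.preimage_mem_nhds hN] with w' hw'
  exact hw'.1 (x := ⟨w'.point i, w'.2 i⟩) (interior_subset (s := C) hw'.2)

/-- Openness of `p` lets the marked points follow a perturbation of the fiber map. -/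
theorem isOpenMap_fiberMap [TopologicalSpace L] [Finite ι] (hpo : IsOpenMap p)
    (hsrc : Continuous (src : FiberMap p q → L)) :
    IsOpenMap (fiberMap : Pointed ι p q → FiberMap p q) := by
  refine IsOpenMap.of_nhds_le fun w s hs => ?_
  obtain ⟨t, ht, hts⟩ := (mem_nhds_subtype _ _ _).1 (mem_map.1 hs)
  obtain ⟨N, hN, P, hP, hNP⟩ := mem_nhds_prod_iff.1 ht
  rw [nhds_pi, mem_pi'] at hP
  obtain ⟨I, W, hW, hWP⟩ := hP
  have hsrcW : ∀ i, src ⁻¹' (p '' W i) ∈ 𝓝 w.fiberMap := fun i =>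
    hsrc.continuousAt.preimage_mem_nhds (w.2 i ▸ hpo.image_mem_nhds (hW i))
  filter_upwards [hN, iInter_mem.2 hsrcW] with θ hθN hθW
  choose x hxW hx using fun i => mem_iInter.1 hθW i
  exact hts (a := ⟨(θ, x), hx⟩) (hNP ⟨hθN, hWP fun i _ => hxW i⟩)

theorem isCompact_preimage_fiberMap [TopologicalSpace L] [CompactSpace X] [T2Space L]
    (hp : Continuous p) (hsrc : Continuous (src : FiberMap p q → L)) {S : Set (FiberMap p q)}
    (hS : IsCompact S) : IsCompact (fiberMap ⁻¹' S : Set (Pointed ι p q)) := by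
  have hclosed : IsClosed {w : FiberMap p q × (ι → X) | ∀ i, p (w.2 i) = w.1.src} := by
    simp only [ofPred_forall]
    exact isClosed_iInter fun i =>
      isClosed_eq (hp.comp ((continuous_apply i).comp continuous_snd)) (hsrc.comp continuous_fst)
  have hS' : fiberMap ⁻¹' S = Subtype.val ⁻¹' (S ×ˢ (univ : Set (ι → X))) := by
    ext w
    simp [fiberMap]
  rw [hS']
  exact hclosed.isClosedEmbedding_subtypeVal.isCompact_preimage (hS.prod isCompact_univ)

theorem mapsTo_inter_preimage_closure [TopologicalSpace L] [Finite ι] (hpo : IsOpenMap p)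
    (hsrc : Continuous (src : FiberMap p q → L)) {Z : Type} [TopologicalSpace Z]
    {B : Set (Pointed ι p q)} (hB : IsOpen B) {g : Pointed ι p q → Z} (hg : Continuous g)
    {T : Set Z} (hT : IsClosed T) {F : Set (FiberMap p q)}
    (hF : MapsTo g (B ∩ fiberMap ⁻¹' F) T) : MapsTo g (B ∩ fiberMap ⁻¹' closure F) T :=
  fun _ hw => closure_minimal hF (hT.preimage hg) <| hB.inter_closure
    ⟨hw.1, (isOpenMap_fiberMap hpo hsrc).preimage_closure_subset_closure_preimage hw.2⟩

def approach (G : Filter (FiberMap p q)) (x : X) : Filter (Pointed Unit p q) :=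
  comap fiberMap G ⊓ comap (fun w => w.point ()) (𝓝 x)

theorem tendsto_fiberMap_approach (G : Filter (FiberMap p q)) (x : X) :
    Tendsto fiberMap (approach G x) G :=
  tendsto_comap.mono_left inf_le_left

theorem approach_neBot [TopologicalSpace L] (hpo : IsOpenMap p) {G : Filter (FiberMap p q)}
    [G.NeBot] {l : L} (hl : Tendsto src G (𝓝 l)) {x : X} (hx : p x = l) :
    (approach G x).NeBot := by
  refine inf_neBot_iff.2 fun s hs s' hs' => ?_
  obtain ⟨A, hA, hAs⟩ := mem_comap.1 hs
  obtain ⟨W, hW, hWs'⟩ := mem_comap.1 hs'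
  have hpW : src ⁻¹' (p '' W) ∈ G := hl (hx ▸ hpo.image_mem_nhds hW)
  obtain ⟨θ, hθA, x', hx'W, hx'⟩ := Filter.nonempty_of_mem (inter_mem hA hpW)
  exact ⟨⟨(θ, fun _ => x'), fun _ => hx'⟩, hAs hθA, hWs' hx'W⟩

theorem eventually_mem_approach {G : Filter (FiberMap p q)} {x₀ : X}
    {s : Set (Pointed Unit p q)} (hs : s ∈ approach G x₀) :
    ∀ᶠ x in 𝓝 x₀, s ∈ approach G x := by
  obtain ⟨t, ht, t', ht', hs⟩ := mem_inf_iff_superset.1 hs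
  obtain ⟨W, hW, hWt'⟩ := mem_comap.1 ht'
  filter_upwards [eventually_mem_nhds_iff.2 hW] with x hx
  exact mem_of_superset (inter_mem_inf ht (mem_comap.2 ⟨W, hx, hWt'⟩)) hs

end Pointed

theorem rng_eq_of_tendsto_eval_approach [TopologicalSpace L] [TopologicalSpace L'] [T2Space L']
    {G : Filter (FiberMap p q)} [G.NeBot] (hpo : IsOpenMap p) (hq : Continuous q) {l : L}
    (hl : Tendsto src G (𝓝 l)) {r : L'} (hr : Tendsto rng G (𝓝 r)) {x : X} (hx : p x = l)
    {y : Y} (hy : Tendsto (fun w => w.eval ()) (Pointed.approach G x) (𝓝 y)) : q y = r := by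
  have := Pointed.approach_neBot hpo hl hx
  refine tendsto_nhds_unique ((hq.tendsto y).comp hy) ?_
  exact (hr.comp (Pointed.tendsto_fiberMap_approach G x)).congr fun w =>
    (w.fiberMap.maps_to _).symm

theorem le_nhds_of_tendsto_eval_approach [TopologicalSpace L] [T2Space L]
    {G : Ultrafilter (FiberMap p q)} (hp : Continuous p) {θ : FiberMap p q}
    (hl : Tendsto (src : FiberMap p q → L) G (𝓝 θ.src))
    (hf : ∀ x : {x // p x = θ.src}, Tendsto (fun w => w.eval ())
      (Pointed.approach (G : Filter (FiberMap p q)) x) (𝓝 (θ.toFun x))) :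
    ↑G ≤ 𝓝 θ := by
  refine le_nhds_iff.2 fun C O hC hO hθCO => ?_
  by_contra hCO
  set Λ := comap Pointed.fiberMap ↑G ⊓
    𝓟 {w : Pointed Unit p q | w.point () ∈ C ∧ w.eval () ∉ O}
  have hΛ : ∀ᶠ w in Λ, w.point () ∈ C ∧ w.eval () ∉ O :=
    mem_inf_of_right (mem_principal_self _)
  have : Λ.NeBot := by
    refine inf_principal_neBot_iff.2 fun s hs => ?_
    obtain ⟨A, hA, hAs⟩ := mem_comap.1 hs
    obtain ⟨θ', hθ'A, hθ'⟩ :=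
      Filter.nonempty_of_mem (inter_mem hA (G.compl_mem_iff_notMem.2 hCO))
    obtain ⟨x', hx'C, hx'O⟩ := not_forall₂.1 hθ'
    exact ⟨⟨(θ', fun _ => x'), fun _ => x'.2⟩, hAs hθ'A, hx'C, hx'O⟩
  obtain ⟨𝒰, h𝒰⟩ := exists_ultrafilter_le Λ
  have h𝒰Λ : ∀ᶠ w in (𝒰 : Filter (Pointed Unit p q)), w.point () ∈ C ∧ w.eval () ∉ O := h𝒰 hΛ
  obtain ⟨x, hxC, hx⟩ := hC.ultrafilter_le_nhds (𝒰.map fun w => w.point ())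
    (tendsto_principal.2 (h𝒰Λ.mono fun _ hw => hw.1))
  have hx : Tendsto (fun w => w.point ()) (𝒰 : Filter (Pointed Unit p q)) (𝓝 x) := hx
  have hG : Tendsto Pointed.fiberMap (𝒰 : Filter (Pointed Unit p q)) G :=
    tendsto_comap.mono_left (h𝒰.trans inf_le_left)
  have hpx : p x = θ.src := tendsto_nhds_unique ((hp.tendsto x).comp hx)
    ((hl.comp hG).congr fun w => (w.2 ()).symm)
  have hO : ∀ᶠ w in (𝒰 : Filter (Pointed Unit p q)), w.eval () ∈ O :=
    (hf ⟨x, hpx⟩).mono_left (le_inf hG.le_comap hx.le_comap) (hO.mem_nhds (hθCO hxC))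
  obtain ⟨w, hwO, -, hwnO⟩ := (hO.and h𝒰Λ).exists
  exact hwnO hwO

end Topological

section Uniform

variable {X L Y L' : Type} [UniformSpace X] [UniformSpace Y] {p : X → L} {q : Y → L'}

def UniformEquicontinuous (F : Set (FiberMap p q)) : Prop :=
  ∀ U ∈ 𝓤 Y, ∃ V ∈ 𝓤 X, ∀ θ ∈ F, ∀ x₁ x₂ : {x : X // p x = θ.src},
    ((x₁ : X), (x₂ : X)) ∈ V → (θ.toFun x₁, θ.toFun x₂) ∈ U

variable [TopologicalSpace L] [CompactSpace X] {F : Set (FiberMap p q)}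

theorem isCompact_closure_totalImage [T2Space L] (hp : Continuous p) (hps : Surjective p)
    (hF : IsCompact (closure F)) : IsCompact (closure (totalImage F)) := by
  have hS := Pointed.isCompact_preimage_fiberMap (ι := Unit) hp (continuous_src_s3 hp hps) hF
  refine (hS.image (Pointed.continuous_eval ())).closure_of_subset ?_
  simp only [totalImage, iUnion_subset_iff, range_subset_iff]
  exact fun θ hθ x => ⟨⟨(θ, fun _ => x), fun _ => x.2⟩, subset_closure hθ, rfl⟩

/-- The pairs of points of a common fiber at which some map of `closure F` fails to be `U`-close
form a compact set off the diagonal; in a compact space the complement of such a set is an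
entourage. -/
theorem uniformEquicontinuous_of_isCompact_closure [T2Space X] [T2Space L] (hp : Continuous p)
    (hps : Surjective p) (hF : IsCompact (closure F)) : UniformEquicontinuous F := by
  intro U hU
  set pts := fun w : Pointed (Fin 2) p q => (w.point 0, w.point 1)
  set A := Pointed.fiberMap ⁻¹' closure F ∩
    {w : Pointed (Fin 2) p q | (w.eval 0, w.eval 1) ∉ interior U}
  have hA : IsCompact (pts '' A) :=
    ((Pointed.isCompact_preimage_fiberMap hp (continuous_src_s3 hp hps) hF).inter_right
      (isOpen_interior.preimage ((Pointed.continuous_eval 0).prodMk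
        (Pointed.continuous_eval 1))).isClosed_compl).image
      ((Pointed.continuous_point 0).prodMk (Pointed.continuous_point 1))
  have hV : (pts '' A)ᶜ ∈ 𝓤 X := by
    rw [← nhdsSet_diagonal_eq_uniformity]
    refine hA.isClosed.isOpen_compl.mem_nhdsSet.2 ?_
    rintro ⟨x, x'⟩ (hxx' : x = x') ⟨w, ⟨-, hwU⟩, hw⟩
    obtain ⟨hw0, hw1⟩ := Prod.ext_iff.1 hw
    have heval : w.eval 0 = w.eval 1 :=
      congrArg w.fiberMap.toFun (Subtype.ext (hw0.trans (hxx'.trans hw1.symm)))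
    exact hwU (heval ▸ refl_mem_uniformity (interior_mem_uniformity hU))
  refine ⟨_, hV, fun θ hθ x₁ x₂ hx => ?_⟩
  by_contra hxU
  exact hx ⟨⟨(θ, ![x₁, x₂]), Fin.forall_fin_two.2 ⟨x₁.2, x₂.2⟩⟩,
    ⟨subset_closure hθ, fun h => hxU (interior_subset h)⟩, rfl⟩

theorem totalImage_closure_subset (hp : Continuous p) (hps : Surjective p) (hpo : IsOpenMap p) :
    totalImage (closure F) ⊆ closure (totalImage F) := by
  simp only [totalImage, iUnion_subset_iff, range_subset_iff]
  intro θ hθ x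
  refine Pointed.mapsTo_inter_preimage_closure (ι := Unit) hpo (continuous_src_s3 hp hps)
    isOpen_univ (Pointed.continuous_eval ()) isClosed_closure ?_
    (x := ⟨(θ, fun _ => x), fun _ => x.2⟩) ⟨trivial, hθ⟩
  exact fun w hw => subset_closure (mem_iUnion₂.2 ⟨_, hw.2, mem_range_self _⟩)

theorem UniformEquicontinuous.closure (hp : Continuous p) (hps : Surjective p)
    (hpo : IsOpenMap p) (hE : UniformEquicontinuous F) : UniformEquicontinuous (closure F) := by
  intro U hU
  obtain ⟨U₀, ⟨hU₀, hU₀c⟩, hU₀U⟩ := uniformity_hasBasis_closed.mem_iff.1 hU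
  obtain ⟨V, hV, hVE⟩ := hE U₀ hU₀
  obtain ⟨V₀, ⟨hV₀, hV₀o⟩, hV₀V⟩ := uniformity_hasBasis_open.mem_iff.1 hV
  refine ⟨V₀, hV₀, fun θ hθ x₁ x₂ hx => hU₀U ?_⟩
  refine Pointed.mapsTo_inter_preimage_closure hpo (continuous_src_s3 hp hps)
    (hV₀o.preimage ((Pointed.continuous_point 0).prodMk (Pointed.continuous_point 1)))
    ((Pointed.continuous_eval 0).prodMk (Pointed.continuous_eval 1)) hU₀c ?_
    (x := ⟨(θ, ![x₁, x₂]), Fin.forall_fin_two.2 ⟨x₁.2, x₂.2⟩⟩) ⟨hx, hθ⟩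
  exact fun w hw => hVE _ hw.2 ⟨w.point 0, w.2 0⟩ ⟨w.point 1, w.2 1⟩ (hV₀V hw.1)

end Uniform

section Limit

variable {X L Y L' : Type} [UniformSpace X] [UniformSpace Y] [TopologicalSpace L]
  {p : X → L} {q : Y → L'} {l : L}

theorem exists_tendsto_eval_approach {G : Ultrafilter (FiberMap p q)} (hpo : IsOpenMap p)
    (hl : Tendsto (src : FiberMap p q → L) G (𝓝 l)) {F : Set (FiberMap p q)} (hFG : F ∈ G)
    (hE : UniformEquicontinuous F) {Q : Set Y} (hQ : IsCompact Q) (hFQ : totalImage F ⊆ Q)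
    {x : X} (hx : p x = l) :
    ∃ y, Tendsto (fun w => w.eval ()) (Pointed.approach (G : Filter (FiberMap p q)) x) (𝓝 y) := by
  set Φ := Pointed.approach (G : Filter (FiberMap p q)) x
  have : Φ.NeBot := Pointed.approach_neBot hpo hl hx
  have hΦ : Tendsto Pointed.fiberMap Φ G := Pointed.tendsto_fiberMap_approach _ x
  have hΦQ : ∀ᶠ w in Φ, w.eval () ∈ Q :=
    (hΦ.eventually_mem hFG).mono fun w hw => hFQ (mem_iUnion₂.2 ⟨_, hw, mem_range_self _⟩)
  obtain ⟨y, -, hy⟩ := hQ (tendsto_principal.2 hΦQ)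
  refine ⟨y, (nhds_basis_uniformity' (𝓤 Y).basis_sets).tendsto_right_iff.2 fun U hU => ?_⟩
  obtain ⟨U', hU', hU's, hU'U⟩ := comp_symm_mem_uniformity_sets hU
  obtain ⟨V, hV, hVE⟩ := hE U' hU'
  obtain ⟨V', hV', hV's, hV'V⟩ := comp_symm_mem_uniformity_sets hV
  have hW : ∀ᶠ w in Φ, (x, w.point ()) ∈ V' :=
    mem_inf_of_right (preimage_mem_comap (mem_nhds_left x hV'))
  -- `y` is a cluster value, so the maps of `G` come `U'`-close to `y` somewhere near `x` ...
  set A := {θ : FiberMap p q | ∃ x' : {x' // p x' = θ.src}, (x, ↑x') ∈ V' ∧ (y, θ.toFun x') ∈ U'}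
  have hA : A ∈ G := by
    by_contra hA
    have hAc : ∀ᶠ w in Φ, w.fiberMap ∉ A := hΦ.eventually_mem (G.compl_mem_iff_notMem.2 hA)
    obtain ⟨w, hwU, hwA, hwV⟩ :=
      ((frequently_map.1 (hy.frequently (mem_nhds_left y hU'))).and_eventually
        (hAc.and hW)).exists
    exact hwA ⟨⟨w.point (), w.2 ()⟩, hwV, hwU⟩
  -- ... and by equicontinuity everywhere near `x`.
  filter_upwards [hΦ.eventually_mem (inter_mem hA hFG), hW] with w ⟨⟨x', hx'V, hx'U⟩, hwF⟩ hwV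
  exact hU'U ⟨_, hx'U, hVE _ hwF x' ⟨w.point (), w.2 ()⟩ (hV'V ⟨x, hV's.symm _ _ hx'V, hwV⟩)⟩

theorem continuous_of_tendsto_eval_approach {G : Filter (FiberMap p q)} [G.NeBot]
    (hpo : IsOpenMap p) (hl : Tendsto src G (𝓝 l)) {f : {x // p x = l} → Y}
    (hf : ∀ x : {x // p x = l}, Tendsto (fun w => w.eval ()) (Pointed.approach G x) (𝓝 (f x))) :
    Continuous f := by
  refine continuous_iff_continuousAt.2 fun x₀ => ?_
  refine (nhds_basis_uniformity' (𝓤 Y).basis_sets).tendsto_right_iff.2 fun U hU => ?_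
  obtain ⟨U', hU', hU's, hU'U⟩ := comp_symm_mem_uniformity_sets hU
  have h₀ := Pointed.eventually_mem_approach (hf x₀ (mem_nhds_left _ hU'))
  filter_upwards [(continuous_subtype_val.tendsto x₀).eventually h₀] with x hx
  have := Pointed.approach_neBot hpo hl x.2
  obtain ⟨w, hw₀, hw⟩ := (Filter.Eventually.and hx (hf x (mem_nhds_left _ hU'))).exists
  exact hU'U ⟨_, hw₀, hU's.symm _ _ hw⟩

theorem isCompact_closure_of_uniformEquicontinuous [CompactSpace X] [T2Space L] [CompactSpace L]
    [TopologicalSpace L'] [CompactSpace L'] [T2Space L'] (hp : Continuous p) (hps : Surjective p)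
    (hpo : IsOpenMap p) (hq : Continuous q) {F : Set (FiberMap p q)}
    (hQ : IsCompact (closure (totalImage F))) (hE : UniformEquicontinuous F) :
    IsCompact (closure F) := by
  have hE' := hE.closure hp hps hpo
  have hFQ := totalImage_closure_subset (F := F) hp hps hpo
  refine isCompact_iff_ultrafilter_le_nhds.2 fun G hG => ?_
  have hl : Tendsto (src : FiberMap p q → L) G (𝓝 (G.map src).lim) := (G.map src).le_nhds_lim
  have hr : Tendsto (rng : FiberMap p q → L') G (𝓝 (G.map rng).lim) := (G.map rng).le_nhds_lim
  choose f hf using fun x : {x // p x = (G.map src).lim} =>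
    exists_tendsto_eval_approach hpo hl (le_principal_iff.1 hG) hE' hQ hFQ x.2
  set θ : FiberMap p q := ⟨_, _, f,
    fun x => rng_eq_of_tendsto_eval_approach hpo hq hl hr x.2 (hf x),
    continuous_of_tendsto_eval_approach hpo hl hf⟩
  have hθ : ↑G ≤ 𝓝 θ := le_nhds_of_tendsto_eval_approach hp hl hf
  exact ⟨θ, isClosed_closure.mem_of_tendsto hθ (le_principal_iff.1 hG), hθ⟩

end Limit

end FiberMap

theorem statement3_general {K L Y L' : Type} [UniformSpace K] [CompactSpace K] [T2Space K]
    [UniformSpace Y]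
    [TopologicalSpace L] [CompactSpace L] [T2Space L]
    [TopologicalSpace L'] [CompactSpace L'] [T2Space L']
    (p : K → L) (q : Y → L') (hp : Continuous p) (hps : Function.Surjective p)
    (hpo : IsOpenMap p) (hq : Continuous q)
    (F : Set (FiberMap p q)) :
    IsCompact (closure F) ↔
      (IsCompact (closure (⋃ θ ∈ F, Set.range θ.toFun)) ∧
       ∀ U ∈ uniformity Y, ∃ V ∈ uniformity K, ∀ θ ∈ F,
         ∀ x₁ x₂ : {x : K // p x = θ.src},
           ((x₁ : K), (x₂ : K)) ∈ V → (θ.toFun x₁, θ.toFun x₂) ∈ U) :=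
  ⟨fun hF => ⟨FiberMap.isCompact_closure_totalImage hp hps hF,
      FiberMap.uniformEquicontinuous_of_isCompact_closure hp hps hF⟩,
    fun ⟨hQ, hE⟩ => FiberMap.isCompact_closure_of_uniformEquicontinuous hp hps hpo hq hQ hE⟩

/-- Arzelà–Ascoli theorem for fiber maps: for `p : K → L` open with `K` compact Hausdorff
and `Y` a Hausdorff uniform space, a set `F ⊆ C_p^q(K,Y)` has compact closure in the
compact-open topology iff its total image has compact closure in `Y` and `F` is
uniformly equicontinuous. -/
theorem statement3 {K L Y L' : Type} [UniformSpace K] [CompactSpace K] [T2Space K]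
    [UniformSpace Y] [T2Space Y]
    [TopologicalSpace L] [CompactSpace L] [T2Space L]
    [TopologicalSpace L'] [CompactSpace L'] [T2Space L']
    (p : K → L) (q : Y → L') (hp : Continuous p) (hps : Function.Surjective p)
    (hpo : IsOpenMap p) (hq : Continuous q) (hqs : Function.Surjective q)
    (F : Set (FiberMap p q)) :
    IsCompact (closure F) ↔
      (IsCompact (closure (⋃ θ ∈ F, Set.range θ.toFun)) ∧
       ∀ U ∈ uniformity Y, ∃ V ∈ uniformity K, ∀ θ ∈ F,
         ∀ x₁ x₂ : {x : K // p x = θ.src},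
           ((x₁ : K), (x₂ : K)) ∈ V → (θ.toFun x₁, θ.toFun x₂) ∈ U) :=
  statement3_general p q hp hps hpo hq F
end

section
/- Every open pseudoisometric extension q : (K,G) → (L,G) of topological dynamical systems is equicontinuous. -/
open Filter Topology Set Function MeasureTheory

/-- The extension `q : (K,G) → (L,G)` is pseudoisometric: there is a set `P` of continuous
functions on `K ×_q K` restricting to pseudometrics on each fiber which generate the
fiber topologies and are invariant under the action of `G`. -/
def IsPseudoIsometricExt (G : Type) {K L : Type} [Group G] [TopologicalSpace K]
    [MulAction G K] (q : K → L) : Prop :=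
  ∃ P : Set ({z : K × K // q z.1 = q z.2} → ℝ),
    (∀ p ∈ P, Continuous p) ∧
    (∀ p ∈ P, ∀ z, 0 ≤ p z) ∧
    (∀ p ∈ P, ∀ x : K, p ⟨(x, x), rfl⟩ = 0) ∧
    (∀ p ∈ P, ∀ x y : K, ∀ h : q x = q y, p ⟨(x, y), h⟩ = p ⟨(y, x), h.symm⟩) ∧
    (∀ p ∈ P, ∀ x y z : K, ∀ (hxy : q x = q y) (hyz : q y = q z),
      p ⟨(x, z), hxy.trans hyz⟩ ≤ p ⟨(x, y), hxy⟩ + p ⟨(y, z), hyz⟩) ∧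
    (∀ l : L, (inferInstance : TopologicalSpace {x : K // q x = l}) =
      TopologicalSpace.generateFrom
        {B | ∃ p ∈ P, ∃ (x₀ : {x : K // q x = l}) (ε : ℝ), 0 < ε ∧
          B = {y : {x : K // q x = l} | p ⟨((x₀ : K), (y : K)), x₀.2.trans y.2.symm⟩ < ε}}) ∧
    (∀ p ∈ P, ∀ g : G, ∀ x y : K, ∀ (h : q x = q y) (h' : q (g • x) = q (g • y)),
      p ⟨(g • x, g • y), h'⟩ = p ⟨(x, y), h⟩)

/-!
On the compact fibre product `K ×_q K`, the pseudometrics of `P` separate the points of each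
fibre, so by compactness finitely many of them, with a common radius `ε`, already force a pair
of points in the same fibre into a given open entourage. The set of pairs at distance `< ε` for
these finitely many `G`-invariant pseudometrics is then a `G`-invariant open neighbourhood of the
diagonal in the fibre product, and in the compact space `K` it extends to an entourage.
-/

open Uniformity

theorem TopologicalSpace.inseparable_generateFrom {X : Type*} {g : Set (Set X)} {x y : X}
    (h : ∀ s ∈ g, x ∈ s ↔ y ∈ s) : @Inseparable X (generateFrom g) x y := by
  let _ := generateFrom g
  show 𝓝 x = 𝓝 y
  rw [nhds_generateFrom, nhds_generateFrom, Set.ext fun s => and_congr_left (h s)]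

theorem IsCompact.exists_finset_forall_exists_lt {X : Type*} [TopologicalSpace X] {S : Set X}
    (hS : IsCompact S) {F : Set (X → ℝ)} (hF : ∀ f ∈ F, Continuous f)
    (hpos : ∀ z ∈ S, ∃ f ∈ F, 0 < f z) :
    ∃ s : Finset (X → ℝ), ↑s ⊆ F ∧ ∃ ε > 0, ∀ z ∈ S, ∃ f ∈ s, ε < f z := by
  classical
  have hcover : S ⊆ ⋃ i : F × ℕ, {z | 1 / (i.2 + 1 : ℝ) < i.1.1 z} := fun z hz => by
    obtain ⟨f, hf, hfz⟩ := hpos z hz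
    obtain ⟨n, hn⟩ := exists_nat_one_div_lt hfz
    exact mem_iUnion.2 ⟨(⟨f, hf⟩, n), hn⟩
  obtain ⟨t, ht⟩ :=
    hS.elim_finite_subcover _ (fun i => isOpen_lt continuous_const (hF _ i.1.2)) hcover
  have hsF : ↑(t.image fun i => i.1.1) ⊆ F := fun f hf => by
    obtain ⟨i, -, rfl⟩ := Finset.mem_image.1 hf
    exact i.1.2
  refine ⟨_, hsF, 1 / (t.sup Prod.snd + 1), by positivity, fun z hz => ?_⟩
  obtain ⟨i, hi, hiz⟩ := mem_iUnion₂.1 (ht hz)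
  refine ⟨i.1.1, Finset.mem_image_of_mem _ hi, lt_of_le_of_lt ?_ hiz⟩
  gcongr
  exact_mod_cast Finset.le_sup (f := Prod.snd) hi

theorem mem_uniformity_of_isOpen_subtype {X : Type*} [UniformSpace X] [CompactSpace X]
    {D : Set (X × X)} (hD : IsClosed D) {W : Set D} (hW : IsOpen W)
    (hdiag : ∀ x (h : (x, x) ∈ D), ⟨(x, x), h⟩ ∈ W) :
    {z | ∀ h : z ∈ D, ⟨z, h⟩ ∈ W} ∈ 𝓤 X := by
  have hext : {z | ∀ h : z ∈ D, ⟨z, h⟩ ∈ W} = (Subtype.val '' Wᶜ)ᶜ := by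
    ext z
    constructor
    · rintro hz ⟨w, hw, rfl⟩
      exact hw (hz w.2)
    · intro hz h
      by_contra hn
      exact hz ⟨⟨z, h⟩, hn, rfl⟩
  have hopen : IsOpen (Subtype.val '' Wᶜ)ᶜ :=
    (hD.isClosedEmbedding_subtypeVal.isClosedMap _ hW.isClosed_compl).isOpen_compl
  rw [← nhdsSet_diagonal_eq_uniformity, hext, hopen.mem_nhdsSet, ← hext]
  rintro ⟨x, y⟩ (rfl : x = y) h
  exact hdiag x h

theorem inseparable_of_pseudometrics_nonpos {K L : Type} [TopologicalSpace K] {q : K → L}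
    {P : Set ({z : K × K // q z.1 = q z.2} → ℝ)}
    (hsymm : ∀ p ∈ P, ∀ x y : K, ∀ h : q x = q y,
      p ⟨(x, y), h⟩ = p ⟨(y, x), h.symm⟩)
    (htri : ∀ p ∈ P, ∀ x y z : K, ∀ (hxy : q x = q y) (hyz : q y = q z),
      p ⟨(x, z), hxy.trans hyz⟩ ≤ p ⟨(x, y), hxy⟩ + p ⟨(y, z), hyz⟩)
    (hgen : ∀ l : L, (inferInstance : TopologicalSpace {x : K // q x = l}) =
      TopologicalSpace.generateFrom
        {B | ∃ p ∈ P, ∃ (x₀ : {x : K // q x = l}) (ε : ℝ), 0 < ε ∧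
          B = {y : {x : K // q x = l} | p ⟨((x₀ : K), (y : K)), x₀.2.trans y.2.symm⟩ < ε}})
    {x y : K} (h : q x = q y) (hle : ∀ p ∈ P, p ⟨(x, y), h⟩ ≤ 0) : Inseparable x y := by
  suffices Inseparable (⟨x, rfl⟩ : {k // q k = q x}) ⟨y, h.symm⟩ from
    this.map continuous_subtype_val
  rw [show (instTopologicalSpaceSubtype : TopologicalSpace {k // q k = q x}) = _ from
    hgen (q x)]
  refine TopologicalSpace.inseparable_generateFrom ?_
  rintro _ ⟨p, hp, x₀, ε, -, rfl⟩
  have hx₀ : q x₀ = q x := x₀.2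
  have h₁ := htri p hp x₀ x y hx₀ h
  have h₂ := htri p hp x₀ y x (hx₀.trans h) h.symm
  have h₃ := hle p hp
  rw [hsymm p hp y x h.symm] at h₂
  show p ⟨(x₀, x), _⟩ < ε ↔ p ⟨(x₀, y), _⟩ < ε
  constructor <;> intro <;> linarith

theorem statement4_general {G K L : Type} [Group G] [UniformSpace K] [CompactSpace K]
    [TopologicalSpace L] [T2Space L] [MulAction G K] [MulAction G L]
    (q : K → L) (hq : Continuous q)
    (heq : ∀ (g : G) (x : K), q (g • x) = g • q x)
    (hpi : IsPseudoIsometricExt G q) :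
    ∀ U ∈ uniformity K, ∃ V ∈ uniformity K, ∀ (g : G) (x y : K),
      q x = q y → (x, y) ∈ V → (g • x, g • y) ∈ U := by
  obtain ⟨P, hPc, -, hPrefl, hPsymm, hPtri, hPgen, hPinv⟩ := hpi
  intro U hU
  obtain ⟨U', ⟨hU', hU'o⟩, hU'U⟩ := uniformity_hasBasis_open.mem_iff.mp hU
  have hD : IsClosed {z : K × K | q z.1 = q z.2} :=
    isClosed_eq (hq.comp continuous_fst) (hq.comp continuous_snd)
  have : CompactSpace {z : K × K // q z.1 = q z.2} :=
    isCompact_iff_compactSpace.mp hD.isCompact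
  have hsep : ∀ z ∈ (Subtype.val ⁻¹' U' : Set {z : K × K // q z.1 = q z.2})ᶜ,
      ∃ p ∈ P, 0 < p z := by
    rintro ⟨⟨x, y⟩, h⟩ hz
    by_contra! hle
    exact hz (mem_ker.1 (inseparable_iff_ker_uniformity.1
      (inseparable_of_pseudometrics_nonpos hPsymm hPtri hPgen h hle)) U' hU')
  obtain ⟨s, hsP, ε, hε, hs⟩ :=
    (hU'o.preimage continuous_subtype_val).isClosed_compl.isCompact.exists_finset_forall_exists_lt
      hPc hsep
  set W : Set {z : K × K // q z.1 = q z.2} := ⋂ p ∈ s, {z | p z < ε}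
  have hWo : IsOpen W :=
    isOpen_biInter_finset fun p hp => isOpen_lt (hPc p (hsP hp)) continuous_const
  refine ⟨_, mem_uniformity_of_isOpen_subtype hD hWo
    fun x h => mem_iInter₂.2 fun p hp => (hPrefl p (hsP hp) x).trans_lt hε, ?_⟩
  intro g x y hxy hV
  have h' : q (g • x) = q (g • y) := by rw [heq, heq, hxy]
  by_contra hgU
  obtain ⟨p, hp, hlt⟩ := hs ⟨(g • x, g • y), h'⟩ fun hmem => hgU (hU'U hmem)
  have hxy_lt : p ⟨(x, y), hxy⟩ < ε := mem_iInter₂.1 (hV hxy) p hp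
  rw [← hPinv p (hsP hp) g x y hxy h'] at hxy_lt
  linarith

/-- Every open pseudoisometric extension `q : (K,G) → (L,G)` of topological dynamical
systems is equicontinuous. -/
theorem statement4 {G K L : Type} [Group G] [TopologicalSpace G] [IsTopologicalGroup G]
    [T2Space G] [UniformSpace K] [CompactSpace K] [T2Space K] [Nonempty K]
    [TopologicalSpace L] [CompactSpace L] [T2Space L] [Nonempty L]
    [MulAction G K] [ContinuousSMul G K] [MulAction G L] [ContinuousSMul G L]
    (q : K → L) (hq : Continuous q) (hqs : Function.Surjective q) (hqo : IsOpenMap q)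
    (heq : ∀ (g : G) (x : K), q (g • x) = g • q x)
    (hpi : IsPseudoIsometricExt G q) :
    ∀ U ∈ uniformity K, ∃ V ∈ uniformity K, ∀ (g : G) (x y : K),
      q x = q y → (x, y) ∈ V → (g • x, g • y) ∈ U :=
  statement4_general q hq heq hpi
end

section
/- Let q : (K,G) → (L,G) be an open extension of topological dynamical systems such that (L,G) is topologically ergodic. Then q is pseudoisometric if and only if the uniform enveloping semigroupoid E_u(q) is compact in the compact-open topology (in which case E_u(q) is automatically a compact groupoid). -/
open Filter Topology Set Function MeasureTheory

/-- Composition `η ∘ θ` of continuous fiber maps in `C_q^q(K,K)` with `r(θ) = s(η)`. -/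
def FiberMap.comp {K L : Type} [TopologicalSpace K] {q : K → L}
    (η θ : FiberMap q q) (h : θ.rng = η.src) : FiberMap q q where
  src := θ.src
  rng := η.rng
  toFun x := η.toFun ⟨θ.toFun x, (θ.maps_to x).trans h⟩
  maps_to x := η.maps_to _
  continuous_toFun := η.continuous_toFun.comp
    (θ.continuous_toFun.subtype_mk fun x => (θ.maps_to x).trans h)

/-- A set of fiber maps is a subsemigroupoid if it is closed under composition of
composable elements. -/
def IsSubsemigroupoid {K L : Type} [TopologicalSpace K] {q : K → L}
    (S : Set (FiberMap q q)) : Prop :=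
  ∀ θ ∈ S, ∀ η ∈ S, ∀ h : θ.rng = η.src, FiberMap.comp η θ h ∈ S

/-- The set `S(q)` of transition maps `φ_g|_{K_l} : K_l → K_{g•l}`. -/
def transitionSet (G : Type) {K L : Type} [Group G] [TopologicalSpace K]
    [MulAction G K] [MulAction G L] (q : K → L) : Set (FiberMap q q) :=
  {θ | ∃ g : G, θ.rng = g • θ.src ∧ ∀ x : {x : K // q x = θ.src}, θ.toFun x = g • (x : K)}

/-- The uniform enveloping semigroupoid `E_u(q)`: the smallest subsemigroupoid of
`C_q^q(K,K)` containing `S(q)` that is closed in the compact-open topology. -/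
def uniformEnveloping (G : Type) {K L : Type} [Group G] [TopologicalSpace K]
    [MulAction G K] [MulAction G L] (q : K → L) : Set (FiberMap q q) :=
  ⋂₀ {S : Set (FiberMap q q) | transitionSet G q ⊆ S ∧ IsSubsemigroupoid S ∧ IsClosed S}

/-- A topological dynamical system `(L,G)` is topologically ergodic if every continuous
`G`-invariant complex-valued function on `L` is constant. -/
def TopologicallyErgodic (G L : Type) [Group G] [TopologicalSpace L] [MulAction G L] : Prop :=
  ∀ f : ContinuousMap L ℂ, (∀ (g : G) (l : L), f (g • l) = f l) → ∀ l l' : L, f l = f l'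

/-!
Forward direction. The fiber maps preserving every pseudometric of `P` form a closed
subsemigroupoid containing the transition maps, hence contain `E_u(q)`. They form a compact set:
along an ultrafilter, sources and ranges converge in `L`; openness of `q` lets every point of the
limit source fiber be approximated by points of the source fibers, the evaluations there converge
in `K`, and the limit map is again isometric, hence continuous because the pseudometrics generate
the fiber topologies. Openness of `q` also makes the space of fiber maps Hausdorff, so `E_u(q)`
is a closed subset of a compact set.

Backward direction. If `E_u(q)` is compact, the elements of `E_u(q)` with a left inverse in
`E_u(q)` form a closed subsemigroupoid containing the transition maps, so every element has one.
Hence "some element of `E_u(q)` maps `K_a` to `K_b`" is a closed equivalence relation on `L`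
containing the orbit relation; its quotient is compact Hausdorff, and topological ergodicity makes
it trivial. For continuous `f`, `d_f(x, y) = sup_{θ ∈ E_u(q)} |f(θx) - f(θy)|` is an invariant
pseudometric. It is upper semicontinuous by compactness of `E_u(q)`, and lower semicontinuous
since every fiber can be carried invertibly onto the fiber where the supremum is nearly attained.
Urysohn functions show that the `d_f` generate the fiber topologies.
-/

theorem exists_ultrafilter_map_eq {α β : Type*} (f : α → β) (𝒰 : Ultrafilter β)
    (F : Filter α) [NeBot (comap f 𝒰 ⊓ F)] :
    ∃ 𝒲 : Ultrafilter α, Ultrafilter.map f 𝒲 = 𝒰 ∧ ↑𝒲 ≤ F := by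
  obtain ⟨𝒲, h𝒲⟩ := Ultrafilter.exists_le (comap f 𝒰 ⊓ F)
  refine ⟨𝒲, Ultrafilter.coe_injective (𝒰.unique ?_), h𝒲.trans inf_le_right⟩
  exact (map_mono (h𝒲.trans inf_le_left)).trans map_comap_le

theorem tendsto_of_ultrafilter_map_eq {α β : Type*} {f : α → β} {𝒲 : Ultrafilter α}
    {𝒰 : Ultrafilter β} (h : Ultrafilter.map f 𝒲 = 𝒰) : Tendsto f 𝒲 𝒰 := by
  rw [Tendsto, ← Ultrafilter.coe_map, h]

theorem t2Space_quotient_of_isClosed {X : Type*} [TopologicalSpace X] [CompactSpace X]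
    [T2Space X] (s : Setoid X) (hs : IsClosed {p : X × X | s p.1 p.2}) :
    T2Space (Quotient s) := by
  have hsat (F : Set X) (hF : IsClosed F) : IsClosed {y | ∃ x ∈ F, s x y} := by
    convert ((hs.inter (hF.prod isClosed_univ)).isCompact.image continuous_snd).isClosed using 1
    ext y
    simp only [mem_ofPred_eq, mem_image, mem_inter_iff, mem_prod, mem_univ, and_true, Prod.exists,
      exists_eq_right]
    tauto
  have hopen (U : Set X) (hU : IsOpen U) :
      IsOpen {c : Quotient s | ∀ z, Quotient.mk s z = c → z ∈ U} := by
    rw [← isQuotientMap_quotient_mk'.isOpen_preimage]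
    convert (hsat Uᶜ hU.isClosed_compl).isOpen_compl using 1
    ext y
    simp only [mem_preimage, mem_ofPred_eq, mem_compl_iff, not_exists, not_and]
    exact ⟨fun h z hz hzy => hz (h z (Quotient.sound' hzy)),
      fun h z hzy => by_contra fun hz => h z hz (Quotient.exact' hzy)⟩
  have hclass (x : X) : IsClosed {y | s x y} :=
    hs.preimage (continuous_const.prodMk continuous_id)
  refine ⟨fun a b hab => ?_⟩
  induction a using Quotient.inductionOn with | _ x =>
  induction b using Quotient.inductionOn with | _ y =>
  have hdisj : Disjoint {z | s x z} {z | s y z} := disjoint_left.2 fun z hxz hyz =>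
    hab (Quotient.sound' (s.trans hxz (s.symm hyz)))
  obtain ⟨U, V, hU, hV, hxU, hyV, hUV⟩ := normal_separation (hclass x) (hclass y) hdisj
  refine ⟨_, _, hopen U hU, hopen V hV, fun z hz => hxU (s.symm (Quotient.exact' hz)),
    fun z hz => hyV (s.symm (Quotient.exact' hz)), disjoint_left.2 fun c hcU hcV => ?_⟩
  induction c using Quotient.inductionOn with | _ z =>
  exact hUV.le_bot ⟨hcU z rfl, hcV z rfl⟩

abbrev FiberProd {K L : Type} (q : K → L) : Type := {z : K × K // q z.1 = q z.2}

theorem apply_fiberProd_congr {K L : Type} {q : K → L} (p : FiberProd q → ℝ) {x y x' y' : K}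
    (hx : x = x') (hy : y = y') (h : q x = q y) (h' : q x' = q y') :
    p ⟨(x, y), h⟩ = p ⟨(x', y'), h'⟩ := by
  subst hx hy; rfl

namespace FiberMap

section Basic

variable {K L : Type} [TopologicalSpace K] {q : K → L}

theorem toFun_congr (θ : FiberMap q q) {x y : K} (hx : q x = θ.src) (hy : q y = θ.src)
    (hxy : x = y) : θ.toFun ⟨x, hx⟩ = θ.toFun ⟨y, hy⟩ := by
  subst hxy; rfl

theorem ext_toFun {θ η : FiberMap q q} (hs : θ.src = η.src) (hr : θ.rng = η.rng)
    (h : ∀ (x : K) (hθ : q x = θ.src) (hη : q x = η.src),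
      θ.toFun ⟨x, hθ⟩ = η.toFun ⟨x, hη⟩) : θ = η := by
  cases θ; cases η
  cases hs; cases hr
  congr
  exact funext fun x => h x x.2 x.2

/-- The subbasic open set `W(C,O)`. -/
def compactOpen (q : K → L) (C O : Set K) : Set (FiberMap q q) :=
  {θ | ∀ x : {x : K // q x = θ.src}, (x : K) ∈ C → θ.toFun x ∈ O}

theorem isOpen_compactOpen {C O : Set K} (hC : IsCompact C) (hO : IsOpen O) :
    IsOpen (compactOpen q C O) :=
  TopologicalSpace.GenerateOpen.basic _ ⟨C, O, hC, hO, rfl⟩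

theorem nhds_eq (θ : FiberMap q q) :
    𝓝 θ = ⨅ s ∈ {s | θ ∈ s ∧ ∃ C O, IsCompact C ∧ IsOpen O ∧ s = compactOpen q C O}, 𝓟 s :=
  TopologicalSpace.nhds_generateFrom

protected def id (q : K → L) (l : L) : FiberMap q q where
  src := l
  rng := l
  toFun x := x
  maps_to x := x.2
  continuous_toFun := continuous_subtype_val

/-- The transition map `φ_g|_{K_l} : K_l → K_{g•l}`. -/
def transition {G : Type} [Group G] [TopologicalSpace G] [MulAction G K] [ContinuousSMul G K]
    [MulAction G L] (heq : ∀ (g : G) (x : K), q (g • x) = g • q x) (g : G) (l : L) :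
    FiberMap q q where
  src := l
  rng := g • l
  toFun x := g • (x : K)
  maps_to x := by rw [heq, x.2]
  continuous_toFun := (continuous_const_smul g).comp continuous_subtype_val

abbrev EvalDomain (q : K → L) : Type := {z : FiberMap q q × K // q z.2 = z.1.src}

def eval (w : EvalDomain q) : K := w.1.1.toFun ⟨w.1.2, w.2⟩

theorem eval_eq {θ : FiberMap q q} (w : EvalDomain q) (h : w.1.1 = θ) :
    eval w = θ.toFun ⟨w.1.2, h ▸ w.2⟩ := by
  obtain ⟨⟨θ₁, u⟩, hu⟩ := w
  subst h
  rfl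

abbrev PairDomain (q : K → L) : Type :=
  {t : FiberMap q q × K × K // q t.2.1 = t.1.src ∧ q t.2.2 = t.1.src}

def pairSource (t : PairDomain q) : FiberProd q :=
  ⟨(t.1.2.1, t.1.2.2), t.2.1.trans t.2.2.symm⟩

def pairImage (t : PairDomain q) : FiberProd q :=
  ⟨(t.1.1.toFun ⟨t.1.2.1, t.2.1⟩, t.1.1.toFun ⟨t.1.2.2, t.2.2⟩),
    (t.1.1.maps_to _).trans (t.1.1.maps_to _).symm⟩

theorem continuous_pairSource : Continuous (pairSource (q := q)) :=
  (((continuous_fst.comp continuous_snd).prodMk (continuous_snd.comp continuous_snd)).comp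
    continuous_subtype_val).subtype_mk _

def IsLeftInverse (σ θ : FiberMap q q) : Prop :=
  σ.src = θ.rng ∧ σ.rng = θ.src ∧
    ∀ (x : K) (hx : q x = θ.src) (h : q (θ.toFun ⟨x, hx⟩) = σ.src),
      σ.toFun ⟨θ.toFun ⟨x, hx⟩, h⟩ = x

theorem IsLeftInverse.comp {θ η σθ ση : FiberMap q q} (hθ : σθ.IsLeftInverse θ)
    (hη : ση.IsLeftInverse η) (h : θ.rng = η.src) :
    (σθ.comp ση (hη.2.1.trans (h.symm.trans hθ.1.symm))).IsLeftInverse (η.comp θ h) := by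
  refine ⟨hη.1, hθ.2.1, fun x hx h₂ => ?_⟩
  have hx' : q (θ.toFun ⟨x, hx⟩) = η.src := (θ.maps_to _).trans h
  calc σθ.toFun ⟨ση.toFun ⟨η.toFun ⟨θ.toFun ⟨x, hx⟩, hx'⟩, h₂⟩, _⟩
      = σθ.toFun ⟨θ.toFun ⟨x, hx⟩, (θ.maps_to _).trans hθ.1.symm⟩ :=
        toFun_congr σθ _ _ (hη.2.2 _ hx' h₂)
    _ = x := hθ.2.2 x hx _

end Basic

section Evaluation

variable {K L : Type} [TopologicalSpace K] [CompactSpace K] [T2Space K] {q : K → L}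

theorem continuous_eval : Continuous (eval (q := q)) := by
  refine continuous_iff_continuousAt.2 fun ⟨⟨θ₀, x₀⟩, h₀⟩ => ?_
  refine tendsto_nhds.2 fun O hO hθO => ?_
  obtain ⟨V, hV, hVeq⟩ := isOpen_induced_iff.1 (hO.preimage θ₀.continuous_toFun)
  have hx₀V : x₀ ∈ V := by
    have : (⟨x₀, h₀⟩ : {x : K // q x = θ₀.src}) ∈ θ₀.toFun ⁻¹' O := hθO
    rwa [← hVeq] at this
  obtain ⟨C, ⟨hC, hCcl⟩, hCV⟩ := (closed_nhds_basis x₀).mem_iff.1 (hV.mem_nhds hx₀V)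
  have hθ₀ : θ₀ ∈ compactOpen q C O := fun u hu => by
    have : u ∈ Subtype.val ⁻¹' V := hCV hu
    rwa [hVeq] at this
  have hnhds : compactOpen q C O ×ˢ interior C ∈ 𝓝 (θ₀, x₀) :=
    prod_mem_nhds ((isOpen_compactOpen hCcl.isCompact hO).mem_nhds hθ₀)
      (interior_mem_nhds.2 hC)
  filter_upwards [continuous_subtype_val.continuousAt.preimage_mem_nhds hnhds]
  rintro ⟨⟨θ, x⟩, hx⟩ ⟨hθ, hxC⟩
  exact hθ ⟨x, hx⟩ (interior_subset hxC)

theorem tendsto_eval {α : Type*} {l : Filter α} {F : α → EvalDomain q} {θ : FiberMap q q}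
    {x : K} (hx : q x = θ.src) (h₁ : Tendsto (fun a => (F a).1.1) l (𝓝 θ))
    (h₂ : Tendsto (fun a => (F a).1.2) l (𝓝 x)) :
    Tendsto (fun a => eval (F a)) l (𝓝 (θ.toFun ⟨x, hx⟩)) :=
  (continuous_eval.tendsto (⟨(θ, x), hx⟩ : EvalDomain q)).comp
    (tendsto_subtype_rng.2 (h₁.prodMk_nhds h₂))

theorem continuous_pairImage : Continuous (pairImage (q := q)) := by
  have hval := continuous_subtype_val (p := fun t : FiberMap q q × K × K =>
    q t.2.1 = t.1.src ∧ q t.2.2 = t.1.src)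
  have h₁ : Continuous fun t : PairDomain q => eval ⟨(t.1.1, t.1.2.1), t.2.1⟩ :=
    continuous_eval.comp (((continuous_fst.prodMk (continuous_fst.comp continuous_snd)).comp
      hval).subtype_mk _)
  have h₂ : Continuous fun t : PairDomain q => eval ⟨(t.1.1, t.1.2.2), t.2.2⟩ :=
    continuous_eval.comp (((continuous_fst.prodMk (continuous_snd.comp continuous_snd)).comp
      hval).subtype_mk _)
  exact (h₁.prodMk h₂).subtype_mk _

end Evaluation

section Topology

variable {K L : Type} [TopologicalSpace K] [TopologicalSpace L] {q : K → L}

theorem exists_ultrafilter_lift (hqo : IsOpenMap q) (𝒰 : Ultrafilter (FiberMap q q)) {l : L}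
    (hl : Tendsto (src : FiberMap q q → L) 𝒰 (𝓝 l)) {x : K} (hx : q x = l) :
    ∃ 𝒲 : Ultrafilter (EvalDomain q), Ultrafilter.map (fun w => w.1.1) 𝒲 = 𝒰 ∧
      Tendsto (fun w : EvalDomain q => w.1.2) 𝒲 (𝓝 x) := by
  have : NeBot (comap (fun w : EvalDomain q => w.1.1) 𝒰 ⊓
      comap (fun w : EvalDomain q => w.1.2) (𝓝 x)) := by
    refine inf_neBot_iff.2 fun A hA B hB => ?_
    obtain ⟨S, hS, hSA⟩ := mem_comap.1 hA
    obtain ⟨U, hU, hUB⟩ := mem_comap.1 hB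
    obtain ⟨U', hU'U, hU', hxU'⟩ := mem_nhds_iff.1 hU
    have hqU' : q '' U' ∈ 𝓝 l := hx ▸ (hqo U' hU').mem_nhds ⟨x, hxU', rfl⟩
    obtain ⟨θ, hθS, u, huU', hu⟩ := Ultrafilter.nonempty_of_mem (inter_mem hS (hl hqU'))
    exact ⟨⟨(θ, u), hu⟩, hSA hθS, hUB (hU'U huU')⟩
  exact exists_ultrafilter_map_eq _ 𝒰 _ |>.imp fun _ h => ⟨h.1, tendsto_iff_comap.2 h.2⟩

theorem src_eq_of_tendsto [T2Space L] (hq : Continuous q) {𝒰 : Ultrafilter (FiberMap q q)}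
    {𝒲 : Ultrafilter (EvalDomain q)} (h𝒲 : Ultrafilter.map (fun w => w.1.1) 𝒲 = 𝒰) {l : L}
    (hl : Tendsto (src : FiberMap q q → L) 𝒰 (𝓝 l)) {x : K}
    (hx : Tendsto (fun w : EvalDomain q => w.1.2) 𝒲 (𝓝 x)) : q x = l :=
  tendsto_nhds_unique ((hq.tendsto x).comp hx)
    ((hl.comp (tendsto_of_ultrafilter_map_eq h𝒲)).congr fun w => w.2.symm)

theorem rng_eq_of_tendsto [T2Space L] (hq : Continuous q) {𝒰 : Ultrafilter (FiberMap q q)}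
    {𝒲 : Ultrafilter (EvalDomain q)} (h𝒲 : Ultrafilter.map (fun w => w.1.1) 𝒲 = 𝒰) {l : L}
    (hl : Tendsto (rng : FiberMap q q → L) 𝒰 (𝓝 l)) {z : K}
    (hz : Tendsto (eval (q := q)) 𝒲 (𝓝 z)) : q z = l :=
  tendsto_nhds_unique ((hq.tendsto z).comp hz)
    ((hl.comp (tendsto_of_ultrafilter_map_eq h𝒲)).congr fun w => (w.1.1.maps_to _).symm)

variable [CompactSpace K]

theorem continuous_src_s7 (hq : Continuous q) (hqs : Surjective q) :
    Continuous (src : FiberMap q q → L) := by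
  refine continuous_def.2 fun V hV => ?_
  convert isOpen_compactOpen (q := q) (hV.isClosed_compl.preimage hq).isCompact isOpen_empty
    using 1
  ext θ
  refine ⟨fun hθ x hx => hx (by rw [x.2]; exact hθ), fun hθ => ?_⟩
  by_contra hθV
  obtain ⟨x, hx⟩ := hqs θ.src
  exact hθ ⟨x, hx⟩ (show q x ∈ Vᶜ from hx ▸ hθV)

theorem continuous_rng_s7 (hq : Continuous q) (hqs : Surjective q) :
    Continuous (rng : FiberMap q q → L) := by
  refine continuous_def.2 fun V hV => ?_
  convert isOpen_compactOpen (q := q) isCompact_univ (hV.preimage hq) using 1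
  ext θ
  refine ⟨fun hθ x _ => show q _ ∈ V from (θ.maps_to x).symm ▸ hθ, fun hθ => ?_⟩
  obtain ⟨x, hx⟩ := hqs θ.src
  simpa only [mem_preimage, maps_to] using hθ ⟨x, hx⟩ (mem_univ _)

theorem isCompact_setOf_pairDomain [T2Space L] (hq : Continuous q)
    (hqs : Surjective q) {S : Set (FiberMap q q)} (hS : IsCompact S) :
    IsCompact {t : PairDomain q | t.1.1 ∈ S} := by
  have hcl : IsClosed {t : FiberMap q q × K × K | q t.2.1 = t.1.src ∧ q t.2.2 = t.1.src} :=
    (isClosed_eq (hq.comp (continuous_fst.comp continuous_snd))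
      ((continuous_src_s7 hq hqs).comp continuous_fst)).inter
    (isClosed_eq (hq.comp (continuous_snd.comp continuous_snd))
      ((continuous_src_s7 hq hqs).comp continuous_fst))
  have hpre : {t : PairDomain q | t.1.1 ∈ S} = Subtype.val ⁻¹' (S ×ˢ univ) := by
    ext t
    simp
  rw [hpre]
  exact hcl.isClosedEmbedding_subtypeVal.isCompact_preimage (hS.prod isCompact_univ)

variable [T2Space K]

theorem t2Space [T2Space L] (hq : Continuous q) (hqs : Surjective q)
    (hqo : IsOpenMap q) : T2Space (FiberMap q q) := by
  refine t2_iff_ultrafilter.2 fun {θ η} 𝒰 hθ hη => ?_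
  have hs : θ.src = η.src := tendsto_nhds_unique
    ((continuous_src_s7 hq hqs).tendsto θ |>.mono_left hθ)
    ((continuous_src_s7 hq hqs).tendsto η |>.mono_left hη)
  refine ext_toFun hs (tendsto_nhds_unique
    ((continuous_rng_s7 hq hqs).tendsto θ |>.mono_left hθ)
    ((continuous_rng_s7 hq hqs).tendsto η |>.mono_left hη)) fun x hxθ hxη => ?_
  obtain ⟨𝒲, h𝒲, hx⟩ := exists_ultrafilter_lift hqo 𝒰
    ((continuous_src_s7 hq hqs).tendsto θ |>.mono_left hθ) hxθ
  have hfst := tendsto_of_ultrafilter_map_eq h𝒲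
  exact tendsto_nhds_unique (tendsto_eval hxθ (hfst.mono_right hθ) hx)
    (tendsto_eval hxη (hfst.mono_right hη) hx)

theorem le_nhds_of_tendsto_eval [T2Space L] (hq : Continuous q) {𝒰 : Ultrafilter (FiberMap q q)}
    {θ : FiberMap q q} (hsrc : Tendsto (src : FiberMap q q → L) 𝒰 (𝓝 θ.src))
    (h : ∀ (𝒲 : Ultrafilter (EvalDomain q)) (x z : K) (hx : q x = θ.src),
      Ultrafilter.map (fun w => w.1.1) 𝒲 = 𝒰 → Tendsto (fun w : EvalDomain q => w.1.2) 𝒲 (𝓝 x) →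
      Tendsto (eval (q := q)) 𝒲 (𝓝 z) → z = θ.toFun ⟨x, hx⟩) :
    ↑𝒰 ≤ 𝓝 θ := by
  rw [nhds_eq]
  refine le_iInf₂ fun s ⟨hθs, C, O, hC, hO, hs⟩ => le_principal_iff.2 ?_
  subst hs
  by_contra hW
  set A : Set (EvalDomain q) := {w | w.1.2 ∈ C ∧ eval w ∉ O}
  have : NeBot (comap (fun w : EvalDomain q => w.1.1) 𝒰 ⊓ 𝓟 A) := by
    refine inf_principal_neBot_iff.2 fun U hU => ?_
    obtain ⟨S, hS, hSU⟩ := mem_comap.1 hU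
    obtain ⟨θ', hθ'S, hθ'W⟩ := Ultrafilter.nonempty_of_mem
      (inter_mem hS (Ultrafilter.compl_mem_iff_notMem.2 hW))
    obtain ⟨x, hxC, hxO⟩ : ∃ x : {x : K // q x = θ'.src}, (x : K) ∈ C ∧ θ'.toFun x ∉ O := by
      simpa [compactOpen] using hθ'W
    exact ⟨⟨(θ', x), x.2⟩, hSU hθ'S, hxC, hxO⟩
  obtain ⟨𝒲, h𝒲, hA⟩ := exists_ultrafilter_map_eq (fun w : EvalDomain q => w.1.1) 𝒰 (𝓟 A)
  obtain ⟨x, -, hx⟩ := isCompact_univ.ultrafilter_le_nhds (𝒲.map fun w => w.1.2)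
    (le_principal_iff.2 univ_mem)
  obtain ⟨z, -, hz⟩ := isCompact_univ.ultrafilter_le_nhds (𝒲.map eval)
    (le_principal_iff.2 univ_mem)
  have hxs : q x = θ.src := src_eq_of_tendsto hq h𝒲 hsrc hx
  have hxC : x ∈ C := hC.isClosed.mem_of_tendsto hx (mem_of_superset (le_principal_iff.1 hA)
    fun w hw => hw.1)
  have hzO : z ∈ Oᶜ := hO.isClosed_compl.mem_of_tendsto hz
    (mem_of_superset (le_principal_iff.1 hA) fun w hw => hw.2)
  exact hzO (h 𝒲 x z hxs h𝒲 hx hz ▸ hθs ⟨x, hxs⟩ hxC)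

theorem IsLeftInverse.of_tendsto [T2Space L]
    (hq : Continuous q) (hqs : Surjective q) (hqo : IsOpenMap q)
    {𝒰 : Ultrafilter (FiberMap q q)} {θ σ : FiberMap q q} {s : FiberMap q q → FiberMap q q}
    (hθ : ↑𝒰 ≤ 𝓝 θ) (hσ : Tendsto s 𝒰 (𝓝 σ)) (hs : ∀ θ', (s θ').src = θ'.rng)
    (hinv : ∀ᶠ θ' in 𝒰, (s θ').IsLeftInverse θ') : σ.IsLeftInverse θ := by
  have hsrc := (continuous_src_s7 hq hqs).tendsto θ |>.mono_left hθ
  refine ⟨tendsto_nhds_unique (((continuous_src_s7 hq hqs).tendsto σ).comp hσ |>.congr hs)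
      ((continuous_rng_s7 hq hqs).tendsto θ |>.mono_left hθ),
    tendsto_nhds_unique (((continuous_rng_s7 hq hqs).tendsto σ).comp hσ |>.congr'
      (hinv.mono fun _ h => h.2.1)) hsrc, fun x hx h => ?_⟩
  obtain ⟨𝒲, h𝒲, hpt⟩ := exists_ultrafilter_lift hqo 𝒰 hsrc hx
  have hfst := tendsto_of_ultrafilter_map_eq h𝒲
  have hev : Tendsto (eval (q := q)) 𝒲 (𝓝 (θ.toFun ⟨x, hx⟩)) :=
    tendsto_eval (F := id) hx (hfst.mono_right hθ) hpt
  have hev₂ := tendsto_eval (F := fun w : EvalDomain q =>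
    ⟨(s w.1.1, eval w), (w.1.1.maps_to _).trans (hs _).symm⟩) h (hσ.comp hfst) hev
  refine tendsto_nhds_unique (hev₂.congr' ?_) hpt
  filter_upwards [hfst.eventually hinv] with w hw using hw.2.2 w.1.2 w.2 _

end Topology

end FiberMap

section UniformEnveloping

variable {G K L : Type} [Group G] [TopologicalSpace K] [MulAction G K] [MulAction G L]
  {q : K → L}

theorem isClosed_uniformEnveloping : IsClosed (uniformEnveloping G q) :=
  isClosed_sInter fun _ hS => hS.2.2

theorem transitionSet_subset_uniformEnveloping : transitionSet G q ⊆ uniformEnveloping G q :=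
  fun _ hθ => mem_sInter.2 fun _ hS => hS.1 hθ

theorem isSubsemigroupoid_uniformEnveloping : IsSubsemigroupoid (uniformEnveloping G q) :=
  fun θ hθ η hη h => mem_sInter.2 fun S hS =>
    hS.2.1 θ (mem_sInter.1 hθ S hS) η (mem_sInter.1 hη S hS) h

theorem uniformEnveloping_subset {S : Set (FiberMap q q)} (h₁ : transitionSet G q ⊆ S)
    (h₂ : IsSubsemigroupoid S) (h₃ : IsClosed S) : uniformEnveloping G q ⊆ S :=
  fun _ hθ => mem_sInter.1 hθ S ⟨h₁, h₂, h₃⟩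

theorem FiberMap.id_mem_uniformEnveloping (l : L) :
    FiberMap.id q l ∈ uniformEnveloping G q :=
  transitionSet_subset_uniformEnveloping ⟨1, (one_smul G l).symm, fun _ => (one_smul G _).symm⟩

theorem FiberMap.transition_mem_uniformEnveloping [TopologicalSpace G] [ContinuousSMul G K]
    (heq : ∀ (g : G) (x : K), q (g • x) = g • q x) (g : G) (l : L) :
    FiberMap.transition heq g l ∈ uniformEnveloping G q :=
  transitionSet_subset_uniformEnveloping ⟨g, rfl, fun _ => rfl⟩

end UniformEnveloping

section Pseudometric

open FiberMap

variable {K L : Type} [TopologicalSpace K] {q : K → L} {P : Set (FiberProd q → ℝ)}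

def fiberBalls (q : K → L) (P : Set (FiberProd q → ℝ)) (l : L) :
    Set (Set {x : K // q x = l}) :=
  {B | ∃ p ∈ P, ∃ (x₀ : {x : K // q x = l}) (ε : ℝ), 0 < ε ∧
      B = {y : {x : K // q x = l} | p ⟨((x₀ : K), (y : K)), x₀.2.trans y.2.symm⟩ < ε}}

def GeneratesFiberTopologies (q : K → L) (P : Set (FiberProd q → ℝ)) : Prop :=
  ∀ l : L, (inferInstance : TopologicalSpace {x : K // q x = l}) =
    TopologicalSpace.generateFrom (fiberBalls q P l)

theorem GeneratesFiberTopologies.nhds_eq (hgen : GeneratesFiberTopologies q P) {l : L}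
    (z : {x : K // q x = l}) : 𝓝 z = ⨅ B ∈ {B | z ∈ B ∧ B ∈ fiberBalls q P l}, 𝓟 B := by
  convert TopologicalSpace.nhds_generateFrom using 2
  exact hgen l

theorem GeneratesFiberTopologies.ball_mem_nhds (hgen : GeneratesFiberTopologies q P)
    {p : FiberProd q → ℝ} (hp : p ∈ P) {l : L} {x₀ z : {x : K // q x = l}} {ε : ℝ}
    (hε : 0 < ε) (hz : p ⟨((x₀ : K), (z : K)), x₀.2.trans z.2.symm⟩ < ε) :
    {y : {x : K // q x = l} | p ⟨((x₀ : K), (y : K)), x₀.2.trans y.2.symm⟩ < ε} ∈ 𝓝 z := by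
  rw [hgen.nhds_eq]
  exact mem_iInf_of_mem _ (mem_iInf_of_mem ⟨hz, p, hp, x₀, ε, hε, rfl⟩ (mem_principal_self _))

theorem GeneratesFiberTopologies.eq_of_forall_eq_zero [T2Space K]
    (hgen : GeneratesFiberTopologies q P)
    (htri : ∀ p ∈ P, ∀ x y z : K, ∀ (hxy : q x = q y) (hyz : q y = q z),
      p ⟨(x, z), hxy.trans hyz⟩ ≤ p ⟨(x, y), hxy⟩ + p ⟨(y, z), hyz⟩)
    {l : L} {z w : {x : K // q x = l}}
    (h : ∀ p ∈ P, p ⟨((z : K), (w : K)), z.2.trans w.2.symm⟩ = 0) : z = w := by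
  have : pure w ≤ 𝓝 z := by
    rw [hgen.nhds_eq]
    refine le_iInf₂ fun B ⟨hzB, p, hp, x₀, ε, _, hB⟩ => le_principal_iff.2 ?_
    subst hB
    calc p ⟨((x₀ : K), (w : K)), _⟩
        ≤ p ⟨((x₀ : K), (z : K)), _⟩ + p ⟨((z : K), (w : K)), _⟩ := htri p hp _ _ _ _ _
      _ < ε := by rw [h p hp, add_zero]; exact hzB
  exact (specializes_iff_pure.2 this).eq.symm

theorem GeneratesFiberTopologies.continuous_of_isometric (hgen : GeneratesFiberTopologies q P)
    (hzero : ∀ p ∈ P, ∀ x : K, p ⟨(x, x), rfl⟩ = 0)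
    (htri : ∀ p ∈ P, ∀ x y z : K, ∀ (hxy : q x = q y) (hyz : q y = q z),
      p ⟨(x, z), hxy.trans hyz⟩ ≤ p ⟨(x, y), hxy⟩ + p ⟨(y, z), hyz⟩)
    {l l' : L} (ζ : {x : K // q x = l} → {x : K // q x = l'})
    (hζ : ∀ p ∈ P, ∀ u v, p ⟨((ζ u : K), (ζ v : K)), (ζ u).2.trans (ζ v).2.symm⟩ =
      p ⟨((u : K), (v : K)), u.2.trans v.2.symm⟩) : Continuous ζ := by
  refine continuous_iff_continuousAt.2 fun u₀ => ?_
  rw [ContinuousAt, hgen.nhds_eq (ζ u₀)]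
  refine tendsto_iInf.2 fun B => tendsto_iInf.2 fun ⟨hB₀, p, hp, x₀, ε, _, hB⟩ => ?_
  subst hB
  refine tendsto_principal.2 ?_
  have hρ : p ⟨((x₀ : K), (ζ u₀ : K)), _⟩ < ε := hB₀
  have hball := hgen.ball_mem_nhds hp (x₀ := u₀) (z := u₀) (sub_pos.2 hρ)
    (by rw [hzero p hp]; exact sub_pos.2 hρ)
  filter_upwards [hball] with u hu
  calc p ⟨((x₀ : K), (ζ u : K)), _⟩
      ≤ p ⟨((x₀ : K), (ζ u₀ : K)), _⟩ + p ⟨((ζ u₀ : K), (ζ u : K)), _⟩ := htri p hp _ _ _ _ _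
    _ < ε := by rw [hζ p hp]; linarith [show p ⟨((u₀ : K), (u : K)), _⟩ < _ from hu]

theorem exists_isOpen_abs_sub_lt {p : FiberProd q → ℝ} (hp : Continuous p) {a b : K}
    (hab : q a = q b) {ε : ℝ} (hε : 0 < ε) :
    ∃ A B : Set K, IsOpen A ∧ IsOpen B ∧ a ∈ A ∧ b ∈ B ∧
      ∀ u v : K, u ∈ A → v ∈ B → ∀ h : q u = q v, |p ⟨(u, v), h⟩ - p ⟨(a, b), hab⟩| < ε := by
  have hp' := hp.continuousAt (x := ⟨(a, b), hab⟩) (Metric.ball_mem_nhds _ hε)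
  rw [nhds_subtype_eq_comap] at hp'
  obtain ⟨T, hT, hTsub⟩ := mem_comap.1 hp'
  obtain ⟨A, hA, B, hB, hAB⟩ := mem_nhds_prod_iff.1 hT
  refine ⟨interior A, interior B, isOpen_interior, isOpen_interior,
    mem_interior_iff_mem_nhds.2 hA, mem_interior_iff_mem_nhds.2 hB, fun u v hu hv h => ?_⟩
  exact (Real.dist_eq _ _).symm.trans_lt
    (hTsub (hAB (mk_mem_prod (interior_subset hu) (interior_subset hv))) : _)

def isometries (q : K → L) (P : Set (FiberProd q → ℝ)) : Set (FiberMap q q) :=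
  {θ | ∀ p ∈ P, ∀ (x y : K) (hx : q x = θ.src) (hy : q y = θ.src),
    p ⟨(θ.toFun ⟨x, hx⟩, θ.toFun ⟨y, hy⟩), (θ.maps_to _).trans (θ.maps_to _).symm⟩ =
      p ⟨(x, y), hx.trans hy.symm⟩}

theorem transitionSet_subset_isometries {G : Type} [Group G] [MulAction G K] [MulAction G L]
    (heq : ∀ (g : G) (x : K), q (g • x) = g • q x)
    (hinv : ∀ p ∈ P, ∀ (g : G) (x y : K), ∀ (h : q x = q y) (h' : q (g • x) = q (g • y)),
      p ⟨(g • x, g • y), h'⟩ = p ⟨(x, y), h⟩) :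
    transitionSet G q ⊆ isometries q P := by
  rintro θ ⟨g, -, hθ⟩ p hp x y hx hy
  have hgxy : q (g • x) = q (g • y) := by rw [heq, heq, hx, hy]
  exact (apply_fiberProd_congr p (hθ ⟨x, hx⟩) (hθ ⟨y, hy⟩) _ hgxy).trans (hinv p hp g x y _ _)

theorem isSubsemigroupoid_isometries : IsSubsemigroupoid (isometries q P) :=
  fun θ hθ _ hη h p hp x y hx hy =>
    (hη p hp _ _ ((θ.maps_to _).trans h) ((θ.maps_to _).trans h)).trans (hθ p hp x y hx hy)

theorem eq_of_tendsto_isometries {p : FiberProd q → ℝ} (hp : p ∈ P) (hpc : Continuous p)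
    {𝒰 : Ultrafilter (FiberMap q q)} (hiso : isometries q P ∈ 𝒰)
    {𝒲₁ 𝒲₂ : Ultrafilter (EvalDomain q)}
    (h₁ : Ultrafilter.map (fun w => w.1.1) 𝒲₁ = 𝒰) (h₂ : Ultrafilter.map (fun w => w.1.1) 𝒲₂ = 𝒰)
    {x₁ x₂ y₁ y₂ : K}
    (hx₁ : Tendsto (fun w : EvalDomain q => w.1.2) 𝒲₁ (𝓝 x₁))
    (hx₂ : Tendsto (fun w : EvalDomain q => w.1.2) 𝒲₂ (𝓝 x₂))
    (hy₁ : Tendsto (FiberMap.eval (q := q)) 𝒲₁ (𝓝 y₁))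
    (hy₂ : Tendsto (FiberMap.eval (q := q)) 𝒲₂ (𝓝 y₂))
    (hx : q x₁ = q x₂) (hy : q y₁ = q y₂) : p ⟨(y₁, y₂), hy⟩ = p ⟨(x₁, x₂), hx⟩ := by
  refine eq_of_forall_dist_le fun ε hε => ?_
  obtain ⟨B₁, B₂, hB₁, hB₂, hyB₁, hyB₂, hB⟩ := exists_isOpen_abs_sub_lt hpc hy (half_pos hε)
  obtain ⟨U₁, U₂, hU₁, hU₂, hxU₁, hxU₂, hU⟩ := exists_isOpen_abs_sub_lt hpc hx (half_pos hε)
  have hS₁ : (fun w : EvalDomain q => w.1.1) ''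
      {w | w.1.2 ∈ U₁ ∧ FiberMap.eval w ∈ B₁} ∈ 𝒰 :=
    h₁ ▸ Ultrafilter.mem_map.2 (mem_of_superset (inter_mem (hx₁ (hU₁.mem_nhds hxU₁))
      (hy₁ (hB₁.mem_nhds hyB₁))) (subset_preimage_image _ _))
  have hS₂ : (fun w : EvalDomain q => w.1.1) ''
      {w | w.1.2 ∈ U₂ ∧ FiberMap.eval w ∈ B₂} ∈ 𝒰 :=
    h₂ ▸ Ultrafilter.mem_map.2 (mem_of_superset (inter_mem (hx₂ (hU₂.mem_nhds hxU₂))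
      (hy₂ (hB₂.mem_nhds hyB₂))) (subset_preimage_image _ _))
  obtain ⟨θ, ⟨⟨w₁, ⟨hw₁U, hw₁B⟩, rfl⟩, ⟨w₂, ⟨hw₂U, hw₂B⟩, hw₂⟩⟩, hθ⟩ :=
    Ultrafilter.nonempty_of_mem (inter_mem (inter_mem hS₁ hS₂) hiso)
  replace hw₂ : w₂.1.1 = w₁.1.1 := hw₂
  have hq₂ : q w₂.1.2 = w₁.1.1.src := hw₂ ▸ w₂.2
  have hθw : p ⟨(FiberMap.eval w₁, FiberMap.eval w₂), (w₁.1.1.maps_to _).trans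
      (hw₂ ▸ (w₂.1.1.maps_to _).symm)⟩ = p ⟨(w₁.1.2, w₂.1.2), w₁.2.trans hq₂.symm⟩ :=
    (apply_fiberProd_congr p rfl (eval_eq w₂ hw₂) _ _).trans (hθ p hp _ _ w₁.2 hq₂)
  have e₁ := hB _ _ hw₁B hw₂B ((w₁.1.1.maps_to _).trans (hw₂ ▸ (w₂.1.1.maps_to _).symm))
  have e₂ := hU _ _ hw₁U hw₂U (w₁.2.trans hq₂.symm)
  rw [hθw] at e₁
  rw [Real.dist_eq]
  have := abs_sub_lt_iff.1 e₁
  have := abs_sub_lt_iff.1 e₂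
  exact abs_sub_le_iff.2 ⟨by linarith, by linarith⟩

end Pseudometric

section Forward

open FiberMap

variable {K L : Type} [TopologicalSpace K] [CompactSpace K] [T2Space K]
  [TopologicalSpace L] [CompactSpace L] [T2Space L] {q : K → L} {P : Set (FiberProd q → ℝ)}

theorem isCompact_isometries (hq : Continuous q) (hqo : IsOpenMap q)
    (hcont : ∀ p ∈ P, Continuous p) (hzero : ∀ p ∈ P, ∀ x : K, p ⟨(x, x), rfl⟩ = 0)
    (htri : ∀ p ∈ P, ∀ x y z : K, ∀ (hxy : q x = q y) (hyz : q y = q z),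
      p ⟨(x, z), hxy.trans hyz⟩ ≤ p ⟨(x, y), hxy⟩ + p ⟨(y, z), hyz⟩)
    (hgen : GeneratesFiberTopologies q P) : IsCompact (isometries q P) := by
  refine isCompact_iff_ultrafilter_le_nhds.2 fun 𝒰 h𝒰 => ?_
  replace h𝒰 : isometries q P ∈ 𝒰 := le_principal_iff.1 h𝒰
  obtain ⟨ls, -, hls⟩ := isCompact_univ.ultrafilter_le_nhds (𝒰.map FiberMap.src)
    (le_principal_iff.2 univ_mem)
  obtain ⟨rs, -, hrs⟩ := isCompact_univ.ultrafilter_le_nhds (𝒰.map FiberMap.rng)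
    (le_principal_iff.2 univ_mem)
  rw [Ultrafilter.coe_map] at hls hrs
  have hlift : ∀ u : {x : K // q x = ls}, ∃ (𝒱 : Ultrafilter (EvalDomain q)) (z : K),
      Ultrafilter.map (fun w => w.1.1) 𝒱 = 𝒰 ∧
      Tendsto (fun w : EvalDomain q => w.1.2) 𝒱 (𝓝 u) ∧
      Tendsto (FiberMap.eval (q := q)) 𝒱 (𝓝 z) := fun u => by
    obtain ⟨𝒱, h𝒱, hu⟩ := exists_ultrafilter_lift hqo 𝒰 hls u.2
    obtain ⟨z, -, hz⟩ := isCompact_univ.ultrafilter_le_nhds (𝒱.map FiberMap.eval)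
      (le_principal_iff.2 univ_mem)
    exact ⟨𝒱, z, h𝒱, hu, hz⟩
  choose 𝒱 ζ h𝒱 hpt hζ using hlift
  have hζrs (u) : q (ζ u) = rs := rng_eq_of_tendsto hq (h𝒱 u) hrs (hζ u)
  have hiso (p) (hp : p ∈ P) (u v : {x : K // q x = ls}) :
      p ⟨(ζ u, ζ v), (hζrs u).trans (hζrs v).symm⟩ = p ⟨((u : K), (v : K)), u.2.trans v.2.symm⟩ :=
    eq_of_tendsto_isometries hp (hcont p hp) h𝒰 (h𝒱 u) (h𝒱 v) (hpt u) (hpt v) (hζ u) (hζ v) _ _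
  let θ : FiberMap q q := ⟨ls, rs, fun u => ζ u, hζrs, continuous_subtype_val.comp
    (hgen.continuous_of_isometric hzero htri (fun u => ⟨ζ u, hζrs u⟩) (hiso · ·))⟩
  refine ⟨θ, fun p hp x y hx hy => hiso p hp ⟨x, hx⟩ ⟨y, hy⟩,
    le_nhds_of_tendsto_eval hq hls fun 𝒲 x z hx h𝒲 hxt hz => ?_⟩
  have hzrs := rng_eq_of_tendsto hq h𝒲 hrs hz
  refine congrArg Subtype.val (hgen.eq_of_forall_eq_zero htri (z := ⟨z, hzrs⟩)
    (w := ⟨ζ ⟨x, hx⟩, hζrs _⟩) fun p hp => ?_)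
  exact (eq_of_tendsto_isometries hp (hcont p hp) h𝒰 h𝒲 (h𝒱 ⟨x, hx⟩) hxt (hpt _) hz (hζ _)
    rfl _).trans (hzero p hp x)

theorem IsPseudoIsometricExt.isCompact_uniformEnveloping {G : Type} [Group G] [MulAction G K]
    [MulAction G L] (hq : Continuous q) (hqs : Surjective q) (hqo : IsOpenMap q)
    (heq : ∀ (g : G) (x : K), q (g • x) = g • q x) (hP : IsPseudoIsometricExt G q) :
    IsCompact (uniformEnveloping G q) := by
  obtain ⟨P, hcont, -, hzero, -, htri, hgen, hinv⟩ := hP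
  have hcpt := isCompact_isometries hq hqo hcont hzero htri hgen
  have := t2Space hq hqs hqo
  exact hcpt.of_isClosed_subset isClosed_uniformEnveloping (uniformEnveloping_subset
    (transitionSet_subset_isometries heq hinv) isSubsemigroupoid_isometries hcpt.isClosed)

end Forward

section Inverse

variable {G K L : Type} [Group G] [TopologicalSpace K] [MulAction G K] [MulAction G L]
  {q : K → L}

def leftInvertibles (G : Type) [Group G] [MulAction G K] [MulAction G L] (q : K → L) :
    Set (FiberMap q q) :=
  {θ | θ ∈ uniformEnveloping G q ∧ ∃ σ ∈ uniformEnveloping G q, σ.IsLeftInverse θ}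

theorem transitionSet_subset_leftInvertibles [TopologicalSpace G] [ContinuousSMul G K]
    (heq : ∀ (g : G) (x : K), q (g • x) = g • q x) :
    transitionSet G q ⊆ leftInvertibles G q := by
  rintro θ ⟨g, hr, hθ⟩
  refine ⟨transitionSet_subset_uniformEnveloping ⟨g, hr, hθ⟩, FiberMap.transition heq g⁻¹ θ.rng,
    FiberMap.transition_mem_uniformEnveloping heq g⁻¹ θ.rng, rfl,
    show g⁻¹ • θ.rng = θ.src by rw [hr, inv_smul_smul], fun x hx _ => ?_⟩
  show g⁻¹ • θ.toFun ⟨x, hx⟩ = x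
  rw [hθ, inv_smul_smul]

theorem isSubsemigroupoid_leftInvertibles : IsSubsemigroupoid (leftInvertibles G q) :=
  fun θ ⟨hθ, σθ, hσθ, hθinv⟩ η ⟨hη, ση, hση, hηinv⟩ h =>
    ⟨isSubsemigroupoid_uniformEnveloping θ hθ η hη h, _,
      isSubsemigroupoid_uniformEnveloping ση hση σθ hσθ _, hθinv.comp hηinv h⟩

theorem isClosed_leftInvertibles [CompactSpace K] [T2Space K] [TopologicalSpace L] [T2Space L]
    (hq : Continuous q) (hqs : Surjective q) (hqo : IsOpenMap q)
    (hE : IsCompact (uniformEnveloping G q)) : IsClosed (leftInvertibles G q) := by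
  refine isClosed_iff_ultrafilter.2 fun θ 𝒰 hθ h𝒰 => ?_
  have hsel (θ' : FiberMap q q) : ∃ σ' : FiberMap q q, (θ' ∈ leftInvertibles G q →
      σ' ∈ uniformEnveloping G q ∧ σ'.IsLeftInverse θ') ∧ σ'.src = θ'.rng := by
    by_cases h : θ' ∈ leftInvertibles G q
    · obtain ⟨-, σ', hσ', hinv⟩ := h
      exact ⟨σ', fun _ => ⟨hσ', hinv⟩, hinv.1⟩
    · exact ⟨FiberMap.id q θ'.rng, fun h' => (h h').elim, rfl⟩
  choose s hs hsrc using hsel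
  obtain ⟨σ, hσ, hσlim⟩ := hE.ultrafilter_le_nhds (𝒰.map s)
    (le_principal_iff.2 (Ultrafilter.mem_map.2 (mem_of_superset h𝒰 fun θ' h => (hs θ' h).1)))
  exact ⟨isClosed_uniformEnveloping.mem_of_tendsto hθ (mem_of_superset h𝒰 fun _ h => h.1), σ, hσ,
    FiberMap.IsLeftInverse.of_tendsto hq hqs hqo hθ hσlim hsrc
      (mem_of_superset h𝒰 fun θ' h => (hs θ' h).2)⟩

theorem exists_isLeftInverse [TopologicalSpace G] [ContinuousSMul G K] [CompactSpace K]
    [T2Space K] [TopologicalSpace L] [T2Space L] (hq : Continuous q) (hqs : Surjective q)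
    (hqo : IsOpenMap q) (heq : ∀ (g : G) (x : K), q (g • x) = g • q x)
    (hE : IsCompact (uniformEnveloping G q)) {θ : FiberMap q q}
    (hθ : θ ∈ uniformEnveloping G q) : ∃ σ ∈ uniformEnveloping G q, σ.IsLeftInverse θ :=
  (uniformEnveloping_subset (transitionSet_subset_leftInvertibles heq)
    isSubsemigroupoid_leftInvertibles (isClosed_leftInvertibles hq hqs hqo hE) hθ).2

end Inverse

theorem exists_mem_uniformEnveloping_src_rng {G K L : Type} [Group G] [TopologicalSpace G]
    [TopologicalSpace K] [CompactSpace K] [T2Space K] [TopologicalSpace L] [CompactSpace L]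
    [T2Space L] [MulAction G K] [ContinuousSMul G K] [MulAction G L] {q : K → L}
    (hq : Continuous q) (hqs : Surjective q) (hqo : IsOpenMap q)
    (heq : ∀ (g : G) (x : K), q (g • x) = g • q x) (hte : TopologicallyErgodic G L)
    (hE : IsCompact (uniformEnveloping G q)) (a b : L) :
    ∃ θ ∈ uniformEnveloping G q, θ.src = a ∧ θ.rng = b := by
  let R (a b : L) : Prop := ∃ θ ∈ uniformEnveloping G q, θ.src = a ∧ θ.rng = b
  have hsymm {a b : L} : R a b → R b a := by
    rintro ⟨θ, hθ, rfl, rfl⟩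
    obtain ⟨σ, hσ, hσs, hσr, -⟩ := exists_isLeftInverse hq hqs hqo heq hE hθ
    exact ⟨σ, hσ, hσs, hσr⟩
  let s : Setoid L := ⟨R, ⟨fun a =>
    ⟨FiberMap.id q a, FiberMap.id_mem_uniformEnveloping a, rfl, rfl⟩, hsymm, fun ⟨θ, hθ, hθs, hθr⟩ ⟨η, hη, hηs, hηr⟩ =>
      ⟨η.comp θ (hθr.trans hηs.symm), isSubsemigroupoid_uniformEnveloping θ hθ η hη _, hθs, hηr⟩⟩⟩
  have hR : IsClosed {p : L × L | s p.1 p.2} := by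
    convert (hE.image ((FiberMap.continuous_src_s7 hq hqs).prodMk
      (FiberMap.continuous_rng_s7 hq hqs))).isClosed using 1
    ext ⟨a, b⟩
    simp only [mem_ofPred_eq, mem_image, Prod.ext_iff]
    exact Iff.rfl
  have := t2Space_quotient_of_isClosed s hR
  by_contra hab
  obtain ⟨f, hfa, hfb, -⟩ := exists_continuous_zero_one_of_isClosed
    (isClosed_singleton (x := Quotient.mk s a)) (isClosed_singleton (x := Quotient.mk s b))
    (disjoint_singleton.2 fun h => hab (Quotient.exact' h))
  have hf := hte ⟨fun l => (f (Quotient.mk s l) : ℂ),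
    Complex.continuous_ofReal.comp (f.continuous.comp continuous_quotient_mk')⟩ (fun g l => by
      have : Quotient.mk s (g • l) = Quotient.mk s l :=
        Quotient.sound' (hsymm ⟨_, FiberMap.transition_mem_uniformEnveloping heq g l, rfl, rfl⟩)
      simp only [ContinuousMap.coe_mk, this]) a b
  simp [hfa rfl, hfb rfl] at hf

section EnvelopeDist

variable {G K L : Type} [Group G] [TopologicalSpace K] [MulAction G K] [MulAction G L]
  {q : K → L} {f : K → ℝ}

def envelopeDistValues (G : Type) [Group G] [MulAction G K] [MulAction G L] (q : K → L)
    (f : K → ℝ) (z : FiberProd q) : Set ℝ :=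
  {r | ∃ θ ∈ uniformEnveloping G q, ∃ (hx : q z.1.1 = θ.src) (hy : q z.1.2 = θ.src),
    r = |f (θ.toFun ⟨z.1.1, hx⟩) - f (θ.toFun ⟨z.1.2, hy⟩)|}

/-- `d_f(x, y) = sup_{θ ∈ E_u(q)} |f(θx) - f(θy)|`. -/
noncomputable def envelopeDist (G : Type) [Group G] [MulAction G K] [MulAction G L]
    (q : K → L) (f : K → ℝ) (z : FiberProd q) : ℝ :=
  sSup (envelopeDistValues G q f z)

theorem envelopeDistValues_nonempty (z : FiberProd q) :
    (envelopeDistValues G q f z).Nonempty :=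
  ⟨_, FiberMap.id q _, FiberMap.id_mem_uniformEnveloping _, rfl, z.2.symm, rfl⟩

theorem bddAbove_envelopeDistValues [CompactSpace K] (hf : Continuous f) (z : FiberProd q) :
    BddAbove (envelopeDistValues G q f z) := by
  obtain ⟨M, hM⟩ := (isCompact_range hf).bddAbove
  obtain ⟨m, hm⟩ := (isCompact_range hf).bddBelow
  refine ⟨M - m, ?_⟩
  rintro r ⟨θ, -, hx, hy, rfl⟩
  have := hM (mem_range_self (θ.toFun ⟨z.1.1, hx⟩))
  have := hm (mem_range_self (θ.toFun ⟨z.1.2, hy⟩))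
  have := hM (mem_range_self (θ.toFun ⟨z.1.2, hy⟩))
  have := hm (mem_range_self (θ.toFun ⟨z.1.1, hx⟩))
  exact abs_sub_le_iff.2 ⟨by linarith, by linarith⟩

theorem abs_sub_le_envelopeDist [CompactSpace K] (hf : Continuous f) {x y : K}
    (h : q x = q y) {θ : FiberMap q q} (hθ : θ ∈ uniformEnveloping G q) (hx : q x = θ.src)
    (hy : q y = θ.src) :
    |f (θ.toFun ⟨x, hx⟩) - f (θ.toFun ⟨y, hy⟩)| ≤ envelopeDist G q f ⟨(x, y), h⟩ :=
  le_csSup (bddAbove_envelopeDistValues hf _) ⟨θ, hθ, hx, hy, rfl⟩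

theorem envelopeDist_le {z : FiberProd q} {M : ℝ}
    (h : ∀ θ ∈ uniformEnveloping G q, ∀ (hx : q z.1.1 = θ.src) (hy : q z.1.2 = θ.src),
      |f (θ.toFun ⟨z.1.1, hx⟩) - f (θ.toFun ⟨z.1.2, hy⟩)| ≤ M) :
    envelopeDist G q f z ≤ M :=
  csSup_le (envelopeDistValues_nonempty _) fun _ ⟨θ, hθ, hx, hy, hr⟩ => hr ▸ h θ hθ hx hy

variable [CompactSpace K]

theorem abs_sub_le_envelopeDist_self (hf : Continuous f) (x y : K) (h : q x = q y) :
    |f x - f y| ≤ envelopeDist G q f ⟨(x, y), h⟩ :=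
  abs_sub_le_envelopeDist hf h (FiberMap.id_mem_uniformEnveloping (q x)) rfl h.symm

theorem envelopeDist_nonneg (hf : Continuous f) (z : FiberProd q) :
    0 ≤ envelopeDist G q f z :=
  (abs_nonneg _).trans (abs_sub_le_envelopeDist_self hf z.1.1 z.1.2 z.2)

theorem envelopeDist_self (hf : Continuous f) (x : K) :
    envelopeDist G q f ⟨(x, x), rfl⟩ = 0 :=
  le_antisymm (envelopeDist_le fun _ _ _ _ => by simp) (envelopeDist_nonneg hf _)

theorem envelopeDist_comm (hf : Continuous f) (x y : K) (h : q x = q y) :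
    envelopeDist G q f ⟨(x, y), h⟩ = envelopeDist G q f ⟨(y, x), h.symm⟩ :=
  le_antisymm
    (envelopeDist_le fun _ hθ hx hy => abs_sub_comm (f _) _ ▸ abs_sub_le_envelopeDist hf _ hθ hy hx)
    (envelopeDist_le fun _ hθ hx hy => abs_sub_comm (f _) _ ▸ abs_sub_le_envelopeDist hf _ hθ hy hx)

theorem envelopeDist_triangle (hf : Continuous f) (x y z : K) (hxy : q x = q y)
    (hyz : q y = q z) :
    envelopeDist G q f ⟨(x, z), hxy.trans hyz⟩ ≤
      envelopeDist G q f ⟨(x, y), hxy⟩ + envelopeDist G q f ⟨(y, z), hyz⟩ :=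
  envelopeDist_le fun θ hθ hx hz => (abs_sub_le _ (f (θ.toFun ⟨y, hxy.symm.trans hx⟩)) _).trans
    (add_le_add (abs_sub_le_envelopeDist hf hxy hθ hx _) (abs_sub_le_envelopeDist hf hyz hθ _ hz))

theorem envelopeDist_smul [TopologicalSpace G] [ContinuousSMul G K]
    (heq : ∀ (g : G) (x : K), q (g • x) = g • q x) (hf : Continuous f) (g : G) (x y : K)
    (h : q x = q y) (h' : q (g • x) = q (g • y)) :
    envelopeDist G q f ⟨(g • x, g • y), h'⟩ = envelopeDist G q f ⟨(x, y), h⟩ := by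
  refine le_antisymm (envelopeDist_le fun θ hθ hx hy => ?_)
    (envelopeDist_le fun θ hθ hx hy => ?_)
  · have hc : (FiberMap.transition heq g (q x)).rng = θ.src := (heq g x).symm.trans hx
    exact abs_sub_le_envelopeDist hf h (isSubsemigroupoid_uniformEnveloping _
      (FiberMap.transition_mem_uniformEnveloping heq g (q x)) θ hθ hc) rfl h.symm
  · have hc : (FiberMap.transition heq g⁻¹ (q (g • x))).rng = θ.src := by
      rw [← hx]
      exact (heq g⁻¹ (g • x)).symm.trans (by rw [inv_smul_smul])
    set T := FiberMap.transition heq g⁻¹ (q (g • x))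
    have key := abs_sub_le_envelopeDist hf h' (isSubsemigroupoid_uniformEnveloping T
      (FiberMap.transition_mem_uniformEnveloping heq g⁻¹ _) θ hθ hc) rfl h'.symm
    have e₁ : (θ.comp T hc).toFun ⟨g • x, rfl⟩ = θ.toFun ⟨x, hx⟩ :=
      FiberMap.toFun_congr θ _ hx (inv_smul_smul g x)
    have e₂ : (θ.comp T hc).toFun ⟨g • y, h'.symm⟩ = θ.toFun ⟨y, hy⟩ :=
      FiberMap.toFun_congr θ _ hy (inv_smul_smul g y)
    rwa [e₁, e₂] at key

end EnvelopeDist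

section EnvelopeDistContinuity

open FiberMap

variable {G K L : Type} [Group G] [TopologicalSpace K] [MulAction G K] [MulAction G L]
  {q : K → L} {f : K → ℝ}

theorem envelopeDistValues_eq_image (z : FiberProd q) :
    envelopeDistValues G q f z = (fun t => |f (pairImage t).1.1 - f (pairImage t).1.2|) ''
      {t : PairDomain q | t.1.1 ∈ uniformEnveloping G q ∧ pairSource t = z} := by
  ext r
  constructor
  · rintro ⟨θ, hθ, hx, hy, rfl⟩
    exact ⟨⟨(θ, z.1.1, z.1.2), hx, hy⟩, ⟨hθ, rfl⟩, rfl⟩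
  · rintro ⟨⟨⟨θ, x, y⟩, hx, hy⟩, ⟨hθ, rfl⟩, rfl⟩
    exact ⟨θ, hθ, hx, hy, rfl⟩

def oscBoundedPairs (G : Type) [Group G] [MulAction G K] [MulAction G L] (q : K → L)
    (f : K → ℝ) (c : ℝ) (m : L) : Set (FiberProd q) :=
  Subtype.val '' {w : {w : FiberProd q // q w.1.1 = m} | ∀ ρ ∈ uniformEnveloping G q,
    ∀ hρ : ρ.src = m, |f (ρ.toFun ⟨w.1.1.1, w.2.trans hρ.symm⟩) -
      f (ρ.toFun ⟨w.1.1.2, (w.1.2.symm.trans w.2).trans hρ.symm⟩)| ≤ c}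

def transportedIntoOscBounded (G : Type) [Group G] [MulAction G K] [MulAction G L]
    (q : K → L) (f : K → ℝ) (c : ℝ) (m : L) : Set (FiberProd q) :=
  pairSource '' {t : PairDomain q | t.1.1 ∈ uniformEnveloping G q ∧ t.1.1.rng = m ∧
    pairImage t ∈ oscBoundedPairs G q f c m}

theorem continuous_abs_sub_pairImage [CompactSpace K] [T2Space K] (hf : Continuous f) :
    Continuous fun t : PairDomain q => |f (pairImage t).1.1 - f (pairImage t).1.2| :=
  ((hf.comp (continuous_fst.comp (continuous_subtype_val.comp continuous_pairImage))).sub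
    (hf.comp (continuous_snd.comp (continuous_subtype_val.comp continuous_pairImage)))).abs

variable [TopologicalSpace L] [T2Space L]

theorem isClosed_oscBoundedPairs (hq : Continuous q) (hf : Continuous f) (c : ℝ) (m : L) :
    IsClosed (oscBoundedPairs G q f c m) := by
  refine (isClosed_eq (hq.comp (continuous_fst.comp continuous_subtype_val))
    continuous_const).isClosedEmbedding_subtypeVal.isClosedMap _ ?_
  simp only [ofPred_forall]
  refine isClosed_iInter fun ρ => isClosed_iInter fun _ => isClosed_iInter fun hρ =>
    isClosed_le (Continuous.abs (.sub (hf.comp (ρ.continuous_toFun.comp ?_))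
      (hf.comp (ρ.continuous_toFun.comp ?_)))) continuous_const
  · exact (continuous_fst.comp (continuous_subtype_val.comp continuous_subtype_val)).subtype_mk _
  · exact (continuous_snd.comp (continuous_subtype_val.comp continuous_subtype_val)).subtype_mk _

variable [CompactSpace K] [T2Space K]

theorem exists_eq_envelopeDist (hq : Continuous q) (hqs : Surjective q)
    (hE : IsCompact (uniformEnveloping G q)) (hf : Continuous f) (z : FiberProd q) :
    ∃ t : PairDomain q, t.1.1 ∈ uniformEnveloping G q ∧ pairSource t = z ∧
      |f (pairImage t).1.1 - f (pairImage t).1.2| = envelopeDist G q f z := by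
  have hc : IsCompact (envelopeDistValues G q f z) := by
    rw [envelopeDistValues_eq_image]
    exact ((isCompact_setOf_pairDomain hq hqs hE).inter_right
      (isClosed_eq continuous_pairSource continuous_const)).image (continuous_abs_sub_pairImage hf)
  have hmem : envelopeDist G q f z ∈ envelopeDistValues G q f z :=
    hc.sSup_mem (envelopeDistValues_nonempty z)
  rw [envelopeDistValues_eq_image] at hmem
  obtain ⟨t, ⟨hθ, hz⟩, ht⟩ := hmem
  exact ⟨t, hθ, hz, ht⟩

theorem upperSemicontinuous_envelopeDist (hq : Continuous q) (hqs : Surjective q)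
    (hE : IsCompact (uniformEnveloping G q)) (hf : Continuous f) :
    UpperSemicontinuous (envelopeDist G q f) := by
  refine upperSemicontinuous_iff_isClosed_preimage.2 fun c => ?_
  have himage : envelopeDist G q f ⁻¹' Ici c = pairSource '' ({t | t.1.1 ∈ uniformEnveloping G q} ∩
      {t | c ≤ |f (pairImage t).1.1 - f (pairImage t).1.2|}) := by
    ext z
    constructor
    · intro hz
      obtain ⟨t, hθ, rfl, ht⟩ := exists_eq_envelopeDist hq hqs hE hf z
      refine ⟨t, ⟨hθ, ?_⟩, rfl⟩
      show c ≤ _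
      rw [ht]
      exact hz
    · rintro ⟨⟨⟨θ, x, y⟩, hx, hy⟩, ⟨hθ, hc⟩, rfl⟩
      exact hc.trans (abs_sub_le_envelopeDist hf _ hθ hx hy)
  rw [himage]
  exact (((isCompact_setOf_pairDomain hq hqs hE).inter_right (isClosed_le continuous_const
    (continuous_abs_sub_pairImage hf))).image continuous_pairSource).isClosed

theorem isClosed_transportedIntoOscBounded (hq : Continuous q) (hqs : Surjective q)
    (hE : IsCompact (uniformEnveloping G q)) (hf : Continuous f) (c : ℝ) (m : L) :
    IsClosed (transportedIntoOscBounded G q f c m) :=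
  ((isCompact_setOf_pairDomain hq hqs hE).inter_right ((isClosed_eq
    ((continuous_rng_s7 hq hqs).comp (continuous_fst.comp continuous_subtype_val))
    continuous_const).inter ((isClosed_oscBoundedPairs hq hf c m).preimage
      continuous_pairImage))).image continuous_pairSource |>.isClosed

end EnvelopeDistContinuity

section Backward

open FiberMap

variable {G K L : Type} [Group G] [TopologicalSpace G] [TopologicalSpace K] [CompactSpace K]
  [T2Space K] [TopologicalSpace L] [T2Space L] [MulAction G K] [ContinuousSMul G K]
  [MulAction G L] {q : K → L} {f : K → ℝ}

/-- If `t` carried `z` into `oscBoundedPairs G q f c θ.rng`, then `θ ∘ σ`, for a left inverse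
`σ` of `t`, would bound the oscillation of `θ` on `z` by `c`. -/
theorem notMem_transportedIntoOscBounded (hq : Continuous q) (hqs : Surjective q)
    (hqo : IsOpenMap q) (heq : ∀ (g : G) (x : K), q (g • x) = g • q x)
    (hE : IsCompact (uniformEnveloping G q)) {c : ℝ} {z : FiberProd q} {θ : FiberMap q q}
    (hθ : θ ∈ uniformEnveloping G q) (hx : q z.1.1 = θ.src) (hy : q z.1.2 = θ.src)
    (hlt : c < |f (θ.toFun ⟨z.1.1, hx⟩) - f (θ.toFun ⟨z.1.2, hy⟩)|) :
    z ∉ transportedIntoOscBounded G q f c θ.rng := by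
  rintro ⟨t, ⟨ht, htm, ⟨w, hwm⟩, hw, hwt⟩, rfl⟩
  obtain rfl : w = pairImage t := hwt
  obtain ⟨σ, hσ, hσs, hσr, hσinv⟩ := exists_isLeftInverse hq hqs hqo heq hE ht
  have hc : σ.rng = θ.src := hσr.trans (t.2.1.symm.trans hx)
  have hρs : (θ.comp σ hc).src = θ.rng := hσs.trans htm
  have hle := hw (θ.comp σ hc) (isSubsemigroupoid_uniformEnveloping σ hσ θ hθ hc) hρs
  have e₁ : (θ.comp σ hc).toFun ⟨(pairImage t).1.1, hwm.trans hρs.symm⟩ = θ.toFun ⟨_, hx⟩ :=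
    toFun_congr θ _ hx (hσinv _ t.2.1 _)
  have e₂ : (θ.comp σ hc).toFun ⟨(pairImage t).1.2,
      ((pairImage t).2.symm.trans hwm).trans hρs.symm⟩ = θ.toFun ⟨_, hy⟩ :=
    toFun_congr θ _ hy (hσinv _ t.2.2 _)
  rw [e₁, e₂] at hle
  exact hle.not_gt hlt

variable [CompactSpace L]

theorem lt_envelopeDist_of_notMem_transportedIntoOscBounded (hq : Continuous q)
    (hqs : Surjective q) (hqo : IsOpenMap q) (heq : ∀ (g : G) (x : K), q (g • x) = g • q x)
    (hte : TopologicallyErgodic G L) (hE : IsCompact (uniformEnveloping G q))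
    (hf : Continuous f) {c : ℝ} {m : L} {z : FiberProd q}
    (hz : z ∉ transportedIntoOscBounded G q f c m) : c < envelopeDist G q f z := by
  obtain ⟨θ, hθ, hθs, hθr⟩ :=
    exists_mem_uniformEnveloping_src_rng hq hqs hqo heq hte hE (q z.1.1) m
  let t : PairDomain q := ⟨(θ, z.1.1, z.1.2), hθs.symm, z.2.symm.trans hθs.symm⟩
  have hm : q (pairImage t).1.1 = m := (θ.maps_to _).trans hθr
  obtain ⟨ρ, hρ, hρm, hlt⟩ : ∃ ρ ∈ uniformEnveloping G q, ∃ hρ : ρ.src = m,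
      c < |f (ρ.toFun ⟨(pairImage t).1.1, hm.trans hρ.symm⟩) -
        f (ρ.toFun ⟨(pairImage t).1.2, ((pairImage t).2.symm.trans hm).trans hρ.symm⟩)| := by
    by_contra! h
    exact hz ⟨t, ⟨hθ, hθr, ⟨pairImage t, hm⟩, fun ρ hρ hρm => h ρ hρ hρm, rfl⟩, rfl⟩
  exact hlt.trans_le (abs_sub_le_envelopeDist hf z.2 (isSubsemigroupoid_uniformEnveloping θ hθ
    ρ hρ (hθr.trans hρm.symm)) hθs.symm _)

/-- If `θ` witnesses `c < d_f(z)`, the pairs that `E_u(q)` cannot carry into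
`oscBoundedPairs G q f c θ.rng` form an open neighbourhood of `z` on which `c < d_f`. -/
theorem lowerSemicontinuous_envelopeDist (hq : Continuous q) (hqs : Surjective q)
    (hqo : IsOpenMap q) (heq : ∀ (g : G) (x : K), q (g • x) = g • q x)
    (hte : TopologicallyErgodic G L) (hE : IsCompact (uniformEnveloping G q))
    (hf : Continuous f) : LowerSemicontinuous (envelopeDist G q f) := by
  refine lowerSemicontinuous_iff_isOpen_preimage.2 fun c =>
    isOpen_iff_forall_mem_open.2 fun z hz => ?_
  obtain ⟨_, ⟨θ, hθ, hx, hy, rfl⟩, hlt⟩ :=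
    exists_lt_of_lt_csSup (envelopeDistValues_nonempty z) hz
  exact ⟨_, fun w hw => lt_envelopeDist_of_notMem_transportedIntoOscBounded hq hqs hqo heq hte
    hE hf hw, (isClosed_transportedIntoOscBounded hq hqs hE hf c θ.rng).isOpen_compl,
    notMem_transportedIntoOscBounded hq hqs hqo heq hE hθ hx hy hlt⟩

theorem continuous_envelopeDist (hq : Continuous q) (hqs : Surjective q) (hqo : IsOpenMap q)
    (heq : ∀ (g : G) (x : K), q (g • x) = g • q x) (hte : TopologicallyErgodic G L)
    (hE : IsCompact (uniformEnveloping G q)) (hf : Continuous f) :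
    Continuous (envelopeDist G q f) :=
  continuous_iff_lower_upperSemicontinuous.2
    ⟨lowerSemicontinuous_envelopeDist hq hqs hqo heq hte hE hf,
      upperSemicontinuous_envelopeDist hq hqs hE hf⟩

/-- Urysohn functions make the balls of the `d_f` a neighbourhood base of each fiber. -/
theorem generatesFiberTopologies_envelopeDist (hq : Continuous q) (hqs : Surjective q)
    (hqo : IsOpenMap q) (heq : ∀ (g : G) (x : K), q (g • x) = g • q x)
    (hte : TopologicallyErgodic G L) (hE : IsCompact (uniformEnveloping G q)) :
    GeneratesFiberTopologies q {p | ∃ f : K → ℝ, Continuous f ∧ p = envelopeDist G q f} := by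
  refine fun l => le_antisymm (le_generateFrom ?_) (le_of_nhds_le_nhds fun z => ?_)
  · rintro _ ⟨_, ⟨f, hf, rfl⟩, x₀, ε, -, rfl⟩
    exact isOpen_Iio.preimage ((continuous_envelopeDist hq hqs hqo heq hte hE hf).comp
      ((continuous_const.prodMk continuous_subtype_val).subtype_mk _))
  rw [TopologicalSpace.nhds_generateFrom]
  intro U hU
  rw [nhds_subtype_eq_comap] at hU
  obtain ⟨V, hV, hVU⟩ := mem_comap.1 hU
  obtain ⟨f, hfz, hfV, -⟩ := exists_continuous_zero_one_of_isClosed isClosed_singleton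
    isOpen_interior.isClosed_compl
    (disjoint_singleton_left.2 (not_not.2 (mem_interior_iff_mem_nhds.2 hV)))
  have hz : envelopeDist G q f ⟨((z : K), (z : K)), z.2.trans z.2.symm⟩ < 1 := by
    rw [envelopeDist_self f.continuous]
    exact one_pos
  refine mem_iInf_of_mem _ (mem_iInf_of_mem ⟨hz, envelopeDist G q f, ⟨f, f.continuous, rfl⟩,
    z, 1, one_pos, rfl⟩ (mem_principal.2 fun y hy => hVU (interior_subset (s := V) ?_)))
  by_contra hyV
  have := abs_sub_le_envelopeDist_self (G := G) f.continuous (z : K) y (z.2.trans y.2.symm)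
  rw [hfz rfl, hfV hyV] at this
  norm_num at this
  exact this.not_gt hy

theorem isPseudoIsometricExt_of_isCompact (hq : Continuous q) (hqs : Surjective q)
    (hqo : IsOpenMap q) (heq : ∀ (g : G) (x : K), q (g • x) = g • q x)
    (hte : TopologicallyErgodic G L) (hE : IsCompact (uniformEnveloping G q)) :
    IsPseudoIsometricExt G q := by
  refine ⟨{p | ∃ f : K → ℝ, Continuous f ∧ p = envelopeDist G q f}, ?_, ?_, ?_, ?_, ?_,
    generatesFiberTopologies_envelopeDist hq hqs hqo heq hte hE, ?_⟩ <;>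
    rintro _ ⟨f, hf, rfl⟩
  · exact continuous_envelopeDist hq hqs hqo heq hte hE hf
  · exact envelopeDist_nonneg hf
  · exact envelopeDist_self hf
  · exact envelopeDist_comm hf
  · exact envelopeDist_triangle hf
  · exact envelopeDist_smul heq hf

end Backward

theorem statement7_general {G K L : Type} [Group G] [TopologicalSpace G]
    [TopologicalSpace K] [CompactSpace K] [T2Space K]
    [TopologicalSpace L] [CompactSpace L] [T2Space L]
    [MulAction G K] [ContinuousSMul G K] [MulAction G L]
    (q : K → L) (hq : Continuous q) (hqs : Function.Surjective q) (hqo : IsOpenMap q)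
    (heq : ∀ (g : G) (x : K), q (g • x) = g • q x)
    (hte : TopologicallyErgodic G L) :
    IsPseudoIsometricExt G q ↔ IsCompact (uniformEnveloping G q) :=
  ⟨fun hP => hP.isCompact_uniformEnveloping hq hqs hqo heq,
    isPseudoIsometricExt_of_isCompact hq hqs hqo heq hte⟩

/-- For an open extension `q : (K,G) → (L,G)` with `(L,G)` topologically ergodic, `q` is
pseudoisometric if and only if the uniform enveloping semigroupoid `E_u(q)` is compact. -/
theorem statement7 {G K L : Type} [Group G] [TopologicalSpace G] [IsTopologicalGroup G]
    [T2Space G] [TopologicalSpace K] [CompactSpace K] [T2Space K] [Nonempty K]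
    [TopologicalSpace L] [CompactSpace L] [T2Space L] [Nonempty L]
    [MulAction G K] [ContinuousSMul G K] [MulAction G L] [ContinuousSMul G L]
    (q : K → L) (hq : Continuous q) (hqs : Function.Surjective q) (hqo : IsOpenMap q)
    (heq : ∀ (g : G) (x : K), q (g • x) = g • q x)
    (hte : TopologicallyErgodic G L) :
    IsPseudoIsometricExt G q ↔ IsCompact (uniformEnveloping G q) :=
  statement7_general q hq hqs hqo heq hte
end

section
/- Let q : (K,G) → (L,G) be an open extension of topological dynamical systems with K metrizable and (L,G) topologically ergodic. Then q is pseudoisometric if and only if q is isometric. -/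
open Filter Topology Set Function MeasureTheory

/-- The extension `q : (K,G) → (L,G)` is isometric: the defining set of invariant
fiberwise pseudometrics can be chosen to consist of a single function which is a metric
on each fiber. -/
def IsIsometricExt (G : Type) {K L : Type} [Group G] [TopologicalSpace K]
    [MulAction G K] (q : K → L) : Prop :=
  ∃ p : {z : K × K // q z.1 = q z.2} → ℝ,
    Continuous p ∧
    (∀ z, 0 ≤ p z) ∧
    (∀ x : K, p ⟨(x, x), rfl⟩ = 0) ∧
    (∀ x y : K, ∀ h : q x = q y, p ⟨(x, y), h⟩ = 0 → x = y) ∧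
    (∀ x y : K, ∀ h : q x = q y, p ⟨(x, y), h⟩ = p ⟨(y, x), h.symm⟩) ∧
    (∀ x y z : K, ∀ (hxy : q x = q y) (hyz : q y = q z),
      p ⟨(x, z), hxy.trans hyz⟩ ≤ p ⟨(x, y), hxy⟩ + p ⟨(y, z), hyz⟩) ∧
    (∀ l : L, (inferInstance : TopologicalSpace {x : K // q x = l}) =
      TopologicalSpace.generateFrom
        {B | ∃ (x₀ : {x : K // q x = l}) (ε : ℝ), 0 < ε ∧
          B = {y : {x : K // q x = l} | p ⟨((x₀ : K), (y : K)), x₀.2.trans y.2.symm⟩ < ε}}) ∧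
    (∀ g : G, ∀ x y : K, ∀ (h : q x = q y) (h' : q (g • x) = q (g • y)),
      p ⟨(g • x, g • y), h'⟩ = p ⟨(x, y), h⟩)

/-!
A sequence of pseudometrics `dₙ` combines into the single pseudometric `∑ 2⁻ⁿ min dₙ 1`.
Since `K ×_q K` is compact metrizable, `C(K ×_q K, ℝ)` is separable, so the family `P` has a
countable uniformly dense subfamily; it still separates the points of each fiber, hence the
combined pseudometric is a metric on each fiber. The topology it generates on a fiber is Hausdorff
and coarser than the compact subspace topology, so the two coincide.
-/

open TopologicalSpace

section GeneratedTopology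

variable {X : Type*}

lemma eq_of_le_of_compactSpace_of_t2Space {t₁ t₂ : TopologicalSpace X}
    [@CompactSpace X t₁] [@T2Space X t₂] (h : t₁ ≤ t₂) : t₁ = t₂ := by
  have hc : @Continuous X X t₁ t₂ id := continuous_id_iff_le.mpr h
  refine le_antisymm h fun U hU => ?_
  have hcl := @Continuous.isClosedMap X X t₁ t₂ _ _ id hc Uᶜ (@IsOpen.isClosed_compl X t₁ U hU)
  rw [Set.image_id] at hcl
  simpa only [compl_compl] using @IsClosed.isOpen_compl X t₂ _ hcl

lemma eq_of_forall_mem_of_eq_generateFrom [t : TopologicalSpace X] [T1Space X]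
    {S : Set (Set X)} (hS : t = generateFrom S) {x y : X} (h : ∀ B ∈ S, x ∈ B → y ∈ B) :
    x = y := by
  refine (pure_le_nhds_iff.mp ?_).symm
  rw [hS, nhds_generateFrom]
  exact le_iInf₂ fun B hB => le_principal_iff.mpr (h B hB.2 hB.1)

def ballsOf (d : X → X → ℝ) : Set (Set X) :=
  {B | ∃ (x₀ : X) (ε : ℝ), 0 < ε ∧ B = {y | d x₀ y < ε}}

lemma eq_of_eq_generateFrom_ballsOf [t : TopologicalSpace X] [T1Space X] {ι : Type*}
    {I : Set ι} {d : ι → X → X → ℝ} (hI : t = generateFrom {B | ∃ i ∈ I, B ∈ ballsOf (d i)})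
    (htri : ∀ i ∈ I, ∀ x y z, d i x z ≤ d i x y + d i y z) {x y : X}
    (h : ∀ i ∈ I, d i x y = 0) : x = y := by
  refine eq_of_forall_mem_of_eq_generateFrom hI ?_
  rintro _ ⟨i, hi, x₀, ε, -, rfl⟩ (hx : d i x₀ x < ε)
  show d i x₀ y < ε
  linarith [htri i hi x₀ x y, h i hi]

lemma t2Space_generateFrom_ballsOf (d : X → X → ℝ) (hself : ∀ x, d x x = 0)
    (hpos : ∀ x y, x ≠ y → 0 < d x y) (hsymm : ∀ x y, d x y = d y x)
    (htri : ∀ x y z, d x z ≤ d x y + d y z) : @T2Space X (generateFrom (ballsOf d)) := by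
  let := generateFrom (ballsOf d)
  refine ⟨fun a b hab => ?_⟩
  have hr : 0 < d a b / 2 := half_pos (hpos a b hab)
  refine ⟨{y | d a y < d a b / 2}, {y | d b y < d a b / 2},
    isOpen_generateFrom_of_mem ⟨a, _, hr, rfl⟩, isOpen_generateFrom_of_mem ⟨b, _, hr, rfl⟩,
    by simpa [hself] using hr, by simpa [hself] using hr, ?_⟩
  refine Set.disjoint_left.mpr fun z (hza : d a z < _) (hzb : d b z < _) => ?_
  linarith [htri a z b, hsymm z b]

lemma eq_generateFrom_ballsOf [t : TopologicalSpace X] [CompactSpace X] (d : X → X → ℝ)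
    (hcont : ∀ x, Continuous (d x)) (hself : ∀ x, d x x = 0)
    (hpos : ∀ x y, x ≠ y → 0 < d x y) (hsymm : ∀ x y, d x y = d y x)
    (htri : ∀ x y z, d x z ≤ d x y + d y z) : t = generateFrom (ballsOf d) := by
  have := t2Space_generateFrom_ballsOf d hself hpos hsymm htri
  refine eq_of_le_of_compactSpace_of_t2Space (le_generateFrom ?_)
  rintro _ ⟨x₀, ε, -, rfl⟩
  exact isOpen_lt (hcont x₀) continuous_const

end GeneratedTopology

lemma exists_seq_uniformly_dense {Z : Type*} [TopologicalSpace Z] [CompactSpace Z]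
    [MetrizableSpace Z] (P : Set (Z → ℝ)) (hP : ∀ p ∈ P, Continuous p) :
    ∃ e : ℕ → Z → ℝ, (∀ n, e n = 0 ∨ e n ∈ P) ∧
      ∀ p ∈ P, ∀ ε > 0, ∃ n, ∀ z, |e n z - p z| < ε := by
  let := metrizableSpaceMetric Z
  let S : Set C(Z, ℝ) := {f | ⇑f = 0 ∨ ⇑f ∈ P}
  have : Nonempty S := ⟨⟨0, Or.inl rfl⟩⟩
  obtain ⟨u, hu⟩ := exists_dense_seq S
  refine ⟨fun n => u n, fun n => (u n).2, fun p hp ε hε => ?_⟩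
  obtain ⟨n, hn⟩ := hu.exists_dist_lt ⟨⟨p, hP p hp⟩, Or.inr hp⟩ hε
  refine ⟨n, fun z => ?_⟩
  rw [dist_comm, Subtype.dist_eq] at hn
  exact (ContinuousMap.dist_apply_le_dist z).trans_lt hn

section DyadicTruncSum

variable {α : Type*} {e : ℕ → α → ℝ}

lemma min_one_le_add {a b c : ℝ} (ha : 0 ≤ a) (hb : 0 ≤ b) (hc : c ≤ a + b) :
    min c 1 ≤ min a 1 + min b 1 := by
  rcases le_total a 1 with h | h <;> rcases le_total b 1 with h' | h' <;>
    simp only [min_eq_left, min_eq_right, h, h'] <;>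
    linarith [min_le_left c 1, min_le_right c 1]

noncomputable def dyadicTruncSum (e : ℕ → α → ℝ) (z : α) : ℝ :=
  ∑' n, (1 / 2 : ℝ) ^ n * min (e n z) 1

lemma dyadicTruncSum_term_nonneg (he : ∀ n z, 0 ≤ e n z) (n : ℕ) (z : α) :
    0 ≤ (1 / 2 : ℝ) ^ n * min (e n z) 1 :=
  mul_nonneg (by positivity) (le_min (he n z) zero_le_one)

lemma dyadicTruncSum_term_le (n : ℕ) (z : α) :
    (1 / 2 : ℝ) ^ n * min (e n z) 1 ≤ (1 / 2) ^ n :=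
  mul_le_of_le_one_right (by positivity) (min_le_right _ _)

lemma summable_dyadicTruncSum_term (he : ∀ n z, 0 ≤ e n z) (z : α) :
    Summable fun n => (1 / 2 : ℝ) ^ n * min (e n z) 1 :=
  summable_geometric_two.of_nonneg_of_le (dyadicTruncSum_term_nonneg he · z)
    (dyadicTruncSum_term_le · z)

lemma dyadicTruncSum_nonneg (he : ∀ n z, 0 ≤ e n z) (z : α) : 0 ≤ dyadicTruncSum e z :=
  tsum_nonneg (dyadicTruncSum_term_nonneg he · z)

lemma dyadicTruncSum_eq_zero_iff (he : ∀ n z, 0 ≤ e n z) (z : α) :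
    dyadicTruncSum e z = 0 ↔ ∀ n, e n z = 0 := by
  rw [dyadicTruncSum, ← (summable_dyadicTruncSum_term he z).hasSum_iff,
    hasSum_zero_iff_of_nonneg (dyadicTruncSum_term_nonneg he · z), funext_iff]
  refine forall_congr' fun n => ?_
  rw [Pi.zero_apply, mul_eq_zero, or_iff_right (by positivity)]
  constructor
  · intro h
    rcases min_choice (e n z) 1 with h₁ | h₁ <;> linarith
  · intro h
    rw [h, min_eq_left zero_le_one]

lemma dyadicTruncSum_congr {a b : α} (h : ∀ n, e n a = e n b) :
    dyadicTruncSum e a = dyadicTruncSum e b := by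
  simp only [dyadicTruncSum, h]

lemma dyadicTruncSum_le_add (he : ∀ n z, 0 ≤ e n z) {a b c : α}
    (h : ∀ n, e n c ≤ e n a + e n b) :
    dyadicTruncSum e c ≤ dyadicTruncSum e a + dyadicTruncSum e b := by
  rw [dyadicTruncSum, dyadicTruncSum, dyadicTruncSum,
    ← (summable_dyadicTruncSum_term he a).tsum_add (summable_dyadicTruncSum_term he b)]
  refine (summable_dyadicTruncSum_term he c).tsum_le_tsum (fun n => ?_)
    ((summable_dyadicTruncSum_term he a).add (summable_dyadicTruncSum_term he b))
  rw [← mul_add]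
  exact mul_le_mul_of_nonneg_left (min_one_le_add (he n a) (he n b) (h n)) (by positivity)

lemma continuous_dyadicTruncSum [TopologicalSpace α] (he : ∀ n z, 0 ≤ e n z)
    (hc : ∀ n, Continuous (e n)) : Continuous (dyadicTruncSum e) := by
  refine continuous_tsum (fun n => continuous_const.mul ((hc n).min continuous_const))
    summable_geometric_two (fun n z => ?_)
  rw [Real.norm_eq_abs, abs_of_nonneg (dyadicTruncSum_term_nonneg he n z)]
  exact dyadicTruncSum_term_le n z

end DyadicTruncSum

structure IsInvariantFiberPseudometric (G : Type) {K L : Type} [Group G] [TopologicalSpace K]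
    [MulAction G K] (q : K → L) (p : {z : K × K // q z.1 = q z.2} → ℝ) : Prop where
  continuous : Continuous p
  nonneg : ∀ z, 0 ≤ p z
  self : ∀ x : K, p ⟨(x, x), rfl⟩ = 0
  symm : ∀ x y : K, ∀ h : q x = q y, p ⟨(x, y), h⟩ = p ⟨(y, x), h.symm⟩
  triangle : ∀ x y z : K, ∀ (hxy : q x = q y) (hyz : q y = q z),
    p ⟨(x, z), hxy.trans hyz⟩ ≤ p ⟨(x, y), hxy⟩ + p ⟨(y, z), hyz⟩
  smul : ∀ g : G, ∀ x y : K, ∀ (h : q x = q y) (h' : q (g • x) = q (g • y)),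
    p ⟨(g • x, g • y), h'⟩ = p ⟨(x, y), h⟩

section FiberedProduct

variable {G K L : Type} [Group G] [TopologicalSpace K] [MulAction G K] {q : K → L}

def fiberDist (p : {z : K × K // q z.1 = q z.2} → ℝ) (l : L) (a b : {x : K // q x = l}) : ℝ :=
  p ⟨((a : K), (b : K)), a.2.trans b.2.symm⟩

lemma isPseudoIsometricExt_iff : IsPseudoIsometricExt G q ↔
    ∃ P : Set ({z : K × K // q z.1 = q z.2} → ℝ), (∀ p ∈ P, IsInvariantFiberPseudometric G q p) ∧
      ∀ l : L, (inferInstance : TopologicalSpace {x : K // q x = l}) =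
        generateFrom {B | ∃ p ∈ P, B ∈ ballsOf (fiberDist p l)} := by
  constructor
  · rintro ⟨P, hc, hnn, hself, hsymm, htri, htop, hsmul⟩
    exact ⟨P, fun p hp => ⟨hc p hp, hnn p hp, hself p hp, hsymm p hp, htri p hp, hsmul p hp⟩, htop⟩
  · rintro ⟨P, hP, htop⟩
    exact ⟨P, fun p hp => (hP p hp).continuous, fun p hp => (hP p hp).nonneg,
      fun p hp => (hP p hp).self, fun p hp => (hP p hp).symm, fun p hp => (hP p hp).triangle,
      htop, fun p hp => (hP p hp).smul⟩

lemma isIsometricExt_iff : IsIsometricExt G q ↔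
    ∃ p : {z : K × K // q z.1 = q z.2} → ℝ, IsInvariantFiberPseudometric G q p ∧
      (∀ x y : K, ∀ h : q x = q y, p ⟨(x, y), h⟩ = 0 → x = y) ∧
      ∀ l : L, (inferInstance : TopologicalSpace {x : K // q x = l}) =
        generateFrom (ballsOf (fiberDist p l)) := by
  constructor
  · rintro ⟨p, hc, hnn, hself, hsep, hsymm, htri, htop, hsmul⟩
    exact ⟨p, ⟨hc, hnn, hself, hsymm, htri, hsmul⟩, hsep, htop⟩
  · rintro ⟨p, hp, hsep, htop⟩
    exact ⟨p, hp.continuous, hp.nonneg, hp.self, hsep, hp.symm, hp.triangle, htop, hp.smul⟩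

lemma IsIsometricExt.isPseudoIsometricExt (h : IsIsometricExt G q) : IsPseudoIsometricExt G q := by
  obtain ⟨p, hp, -, htop⟩ := isIsometricExt_iff.mp h
  refine isPseudoIsometricExt_iff.mpr ⟨{p}, by simpa using hp, fun l => ?_⟩
  simpa using htop l

namespace IsInvariantFiberPseudometric

variable {p : {z : K × K // q z.1 = q z.2} → ℝ}

lemma zero : IsInvariantFiberPseudometric G q 0 :=
  ⟨continuous_const, fun _ => le_rfl, fun _ => rfl, fun _ _ _ => rfl,
    fun _ _ _ _ _ => by simp, fun _ _ _ _ _ => rfl⟩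

lemma dyadicTruncSum {e : ℕ → {z : K × K // q z.1 = q z.2} → ℝ}
    (he : ∀ n, IsInvariantFiberPseudometric G q (e n)) :
    IsInvariantFiberPseudometric G q (dyadicTruncSum e) where
  continuous := continuous_dyadicTruncSum (fun n => (he n).nonneg) fun n => (he n).continuous
  nonneg := dyadicTruncSum_nonneg fun n => (he n).nonneg
  self x := (dyadicTruncSum_eq_zero_iff (fun n => (he n).nonneg) _).mpr fun n => (he n).self x
  symm x y h := dyadicTruncSum_congr fun n => (he n).symm x y h
  triangle x y z hxy hyz :=
    dyadicTruncSum_le_add (fun n => (he n).nonneg) fun n => (he n).triangle x y z hxy hyz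
  smul g x y h h' := dyadicTruncSum_congr fun n => (he n).smul g x y h h'

lemma continuous_fiberDist (hp : IsInvariantFiberPseudometric G q p) (l : L)
    (a : {x : K // q x = l}) : Continuous (fiberDist p l a) :=
  hp.continuous.comp ((continuous_const.prodMk continuous_subtype_val).subtype_mk _)

lemma fiberDist_triangle (hp : IsInvariantFiberPseudometric G q p) (l : L)
    (a b c : {x : K // q x = l}) : fiberDist p l a c ≤ fiberDist p l a b + fiberDist p l b c :=
  hp.triangle a b c _ _

lemma eq_generateFrom_ballsOf_fiberDist [CompactSpace K] [TopologicalSpace L] [T2Space L]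
    (hq : Continuous q) (hp : IsInvariantFiberPseudometric G q p)
    (hsep : ∀ x y : K, ∀ h : q x = q y, p ⟨(x, y), h⟩ = 0 → x = y) (l : L) :
    (inferInstance : TopologicalSpace {x : K // q x = l}) =
      generateFrom (ballsOf (fiberDist p l)) := by
  have : CompactSpace {x : K // q x = l} :=
    isCompact_iff_compactSpace.mp (isClosed_eq hq continuous_const).isCompact
  refine eq_generateFrom_ballsOf _ (hp.continuous_fiberDist l) (fun a => hp.self a)
    (fun a b hab => (hp.nonneg _).lt_of_ne fun h => hab (Subtype.ext (hsep _ _ _ h.symm)))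
    (fun a b => hp.symm a b _) (hp.fiberDist_triangle l)

end IsInvariantFiberPseudometric

end FiberedProduct

theorem statement9_general {G K L : Type} [Group G] [TopologicalSpace K] [CompactSpace K]
    [TopologicalSpace.MetrizableSpace K] [TopologicalSpace L] [T2Space L] [MulAction G K]
    (q : K → L) (hq : Continuous q) :
    IsPseudoIsometricExt G q ↔ IsIsometricExt G q := by
  refine ⟨fun h => ?_, IsIsometricExt.isPseudoIsometricExt⟩
  obtain ⟨P, hP, htop⟩ := isPseudoIsometricExt_iff.mp h
  have : CompactSpace {z : K × K // q z.1 = q z.2} := isCompact_iff_compactSpace.mp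
    (isClosed_eq (hq.comp continuous_fst) (hq.comp continuous_snd)).isCompact
  have : MetrizableSpace {z : K × K // q z.1 = q z.2} := IsEmbedding.subtypeVal.metrizableSpace
  obtain ⟨e, he_mem, hdense⟩ := exists_seq_uniformly_dense P fun p hp => (hP p hp).continuous
  have he : ∀ n, IsInvariantFiberPseudometric G q (e n) := fun n =>
    (he_mem n).elim (fun h0 => h0 ▸ .zero) (hP _)
  have hsep : ∀ x y : K, ∀ h : q x = q y, dyadicTruncSum e ⟨(x, y), h⟩ = 0 → x = y := by
    intro x y h h0
    have he0 := (dyadicTruncSum_eq_zero_iff (fun n => (he n).nonneg) _).mp h0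
    have hP0 : ∀ p ∈ P, fiberDist p (q y) ⟨x, h⟩ ⟨y, rfl⟩ = 0 := fun p hp =>
      eq_of_forall_dist_le fun ε hε => by
        obtain ⟨n, hn⟩ := hdense p hp ε hε
        simpa [fiberDist, he0 n, Real.dist_eq] using (hn ⟨(x, y), h⟩).le
    exact congrArg Subtype.val
      (eq_of_eq_generateFrom_ballsOf (htop (q y)) (fun p hp => (hP p hp).fiberDist_triangle _) hP0)
  exact isIsometricExt_iff.mpr ⟨_, .dyadicTruncSum he, hsep,
    (IsInvariantFiberPseudometric.dyadicTruncSum he).eq_generateFrom_ballsOf_fiberDist hq hsep⟩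

/-- For an open extension `q : (K,G) → (L,G)` with `K` metrizable and `(L,G)`
topologically ergodic, `q` is pseudoisometric if and only if it is isometric. -/
theorem statement9 {G K L : Type} [Group G] [TopologicalSpace G] [IsTopologicalGroup G]
    [T2Space G] [TopologicalSpace K] [CompactSpace K] [T2Space K] [Nonempty K]
    [TopologicalSpace.MetrizableSpace K]
    [TopologicalSpace L] [CompactSpace L] [T2Space L] [Nonempty L]
    [MulAction G K] [ContinuousSMul G K] [MulAction G L] [ContinuousSMul G L]
    (q : K → L) (hq : Continuous q) (hqs : Function.Surjective q) (hqo : IsOpenMap q)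
    (heq : ∀ (g : G) (x : K), q (g • x) = g • q x)
    (hte : TopologicallyErgodic G L) :
    IsPseudoIsometricExt G q ↔ IsIsometricExt G q :=
  statement9_general q hq
end
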